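/- arXiv:gr-qc/9406023 — 12 statements merged into one kernel-verified Lean document; each statement's English description precedes it below -/
import Mathlib

section
/- Let M be a topological space, let φ : M → N be a topological embedding into a proper metric space N (closed bounded sets are compact) with φ(M) open, and let φ' : M → N' be a topological embedding into a metric space N' with φ'(M) open. Let B ⊆ frontier(φ(M)) be compact and B' ⊆ frontier(φ'(M)), and suppose B covers B' (for every open U ⊇ B there is an open U' ⊇ B' with φ(φ'⁻¹(U' ∩ φ'(M))) ⊆ U). Then for every sequence (pᵢ) in M such that (φ'(pᵢ)) has a subsequence converging to some point of B', the sequence (φ(pᵢ)) has a subsequence converging to some point of B. -/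
open Set Topology Filter Metric

/-- `B` (a boundary set of the envelopment `φ`) covers `B'` (a boundary set of the
envelopment `φ'`): for every open neighbourhood `U` of `B` there is an open
neighbourhood `U'` of `B'` with `φ(φ'⁻¹(U' ∩ φ'(M))) ⊆ U`. -/
def Covers {M N N' : Type*} [TopologicalSpace M] [TopologicalSpace N] [TopologicalSpace N']
    (φ : M → N) (φ' : M → N') (B : Set N) (B' : Set N') : Prop :=
  ∀ U : Set N, IsOpen U → B ⊆ U →
    ∃ U' : Set N', IsOpen U' ∧ B' ⊆ U' ∧ φ '' (φ' ⁻¹' (U' ∩ range φ')) ⊆ U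

theorem covers_subsequence
    {M N N' : Type*} [TopologicalSpace M] [MetricSpace N] [ProperSpace N] [MetricSpace N']
    {φ : M → N} {φ' : M → N'}
    (hφ : Topology.IsEmbedding φ) (hφo : IsOpen (range φ))
    (hφ' : Topology.IsEmbedding φ') (hφ'o : IsOpen (range φ'))
    {B : Set N} {B' : Set N'}
    (hB : B ⊆ frontier (range φ)) (hBc : IsCompact B)
    (hB' : B' ⊆ frontier (range φ'))
    (hcov : Covers φ φ' B B')
    (p : ℕ → M)
    (h : ∃ b' ∈ B', ∃ k : ℕ → ℕ, StrictMono k ∧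
      Filter.Tendsto (fun i => φ' (p (k i))) Filter.atTop (nhds b')) :
    ∃ b ∈ B, ∃ k : ℕ → ℕ, StrictMono k ∧
      Filter.Tendsto (fun i => φ (p (k i))) Filter.atTop (nhds b) := by
  obtain ⟨b', hb'B, k, hk, hconv⟩ := h
  set q : ℕ → N := fun i => φ (p (k i)) with hq
  have key : ∀ ε > (0 : ℝ), ∀ᶠ i in atTop, q i ∈ Metric.thickening ε B := by
    intro ε hε
    obtain ⟨U', hU'o, hBU', hsub⟩ := hcov (Metric.thickening ε B)
      Metric.isOpen_thickening (Metric.self_subset_thickening hε B)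
    have hev : ∀ᶠ i in atTop, φ' (p (k i)) ∈ U' :=
      hconv (hU'o.mem_nhds (hBU' hb'B))
    filter_upwards [hev] with i hi
    exact hsub ⟨p (k i), ⟨hi, mem_range_self _⟩, rfl⟩
  have hKc : IsCompact (Metric.cthickening 1 B) := hBc.cthickening
  obtain ⟨N₀, hN₀⟩ := eventually_atTop.mp (key 1 one_pos)
  have hr : ∀ i, q (N₀ + i) ∈ Metric.cthickening 1 B := fun i =>
    Metric.thickening_subset_cthickening 1 B (hN₀ _ (Nat.le_add_right _ _))
  obtain ⟨b, _, l, hl, hlim⟩ := hKc.tendsto_subseq hr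
  have hbB : b ∈ B := by
    have hmem : ∀ ε > (0 : ℝ), b ∈ Metric.cthickening ε B := by
      intro ε hε
      refine (Metric.isClosed_cthickening).mem_of_tendsto hlim ?_
      obtain ⟨N₁, hN₁⟩ := eventually_atTop.mp (key ε hε)
      filter_upwards [eventually_ge_atTop N₁] with i hi
      exact Metric.thickening_subset_cthickening ε B
        (hN₁ _ (le_trans (le_trans hi (hl.le_apply)) (Nat.le_add_left _ _)))
    have : b ∈ closure B := by
      rw [Metric.closure_eq_iInter_cthickening]
      simp only [mem_iInter]
      intro ε hε
      exact hmem ε hε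
    rwa [hBc.isClosed.closure_eq] at this
  refine ⟨b, hbB, fun i => k (N₀ + l i), hk.comp (fun a b hab => by
    have := hl hab; omega), hlim⟩
end

section
/- Let φ : M → N and φ' : M → N' be topological embeddings with open images into proper metric spaces N and N'. Let B ⊆ frontier(φ(M)) and B' ⊆ frontier(φ'(M)) with B compact. If B and B' are equivalent (each covers the other, where B covers B' means: for every open U ⊇ B in N there is an open U' ⊇ B' in N' with φ(φ'⁻¹(U' ∩ φ'(M))) ⊆ U), then B' is closed in N'. -/
open Set Topology Filter Metric

theorem isClosed_of_equiv_compact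
    {M N N' : Type*} [TopologicalSpace M] [MetricSpace N] [ProperSpace N]
    [MetricSpace N'] [ProperSpace N']
    {φ : M → N} {φ' : M → N'}
    (hφ : Topology.IsEmbedding φ) (hφo : IsOpen (range φ))
    (hφ' : Topology.IsEmbedding φ') (hφ'o : IsOpen (range φ'))
    {B : Set N} {B' : Set N'}
    (hB : B ⊆ frontier (range φ)) (hB' : B' ⊆ frontier (range φ'))
    (hBc : IsCompact B)
    (h1 : Covers φ φ' B B') (h2 : Covers φ' φ B' B) :
    IsClosed B' := by
  rw [← closure_subset_iff_isClosed]
  intro y hy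
  by_contra hyB'
  -- B' is disjoint from range φ'
  have hdisj : ∀ x : M, φ' x ∉ B' := by
    intro x hx
    exact (hB' hx).2 (by rw [hφ'o.interior_eq]; exact mem_range_self x)
  -- every point of B' is in the closure of range φ'
  have hcl : ∀ b ∈ B', b ∈ closure (range φ') := fun b hb => (hB' hb).1
  -- shrinking open neighbourhoods of B
  set U : ℕ → Set N := fun j => Metric.thickening (1 / (j + 1 : ℝ)) B with hU
  have hδpos : ∀ j : ℕ, (0 : ℝ) < 1 / (j + 1 : ℝ) := fun j => by positivity
  have hUopen : ∀ j, IsOpen (U j) := fun j => Metric.isOpen_thickening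
  have hBU : ∀ j, B ⊆ U j := fun j => Metric.self_subset_thickening (hδpos j) B
  choose U' hU'open hB'U' hUim using fun j => h1 (U j) (hUopen j) (hBU j)
  -- finite intersections
  set W : ℕ → Set N' := fun i => ⋂ j ∈ Set.Iic i, U' j with hW
  have hWopen : ∀ i, IsOpen (W i) := fun i =>
    (Set.finite_Iic i).isOpen_biInter fun j _ => hU'open j
  have hB'W : ∀ i, B' ⊆ W i := fun i =>
    Set.subset_iInter₂ fun j _ => hB'U' j
  -- choose points of range φ' in W i close to y
  have hex : ∀ i : ℕ, ∃ x : M, φ' x ∈ W i ∧ dist (φ' x) y < 1 / (i + 1 : ℝ) := by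
    intro i
    obtain ⟨b, hbB', hby⟩ := Metric.mem_closure_iff.mp hy _ (hδpos i)
    have hbO : b ∈ W i ∩ Metric.ball y (1 / (i + 1 : ℝ)) := by
      refine ⟨hB'W i hbB', ?_⟩
      rw [Metric.mem_ball, dist_comm]
      exact hby
    have hO : IsOpen (W i ∩ Metric.ball y (1 / (i + 1 : ℝ))) :=
      (hWopen i).inter Metric.isOpen_ball
    obtain ⟨p, ⟨hpW, hpb⟩, x, rfl⟩ :=
      _root_.mem_closure_iff.mp (hcl b hbB') _ hO hbO
    exact ⟨x, hpW, Metric.mem_ball.mp hpb⟩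
  choose m hmW hmdist using hex
  -- φ (m i) lies in U j for j ≤ i
  have hφm : ∀ j i : ℕ, j ≤ i → φ (m i) ∈ U j := by
    intro j i hji
    refine hUim j ⟨m i, ⟨?_, mem_range_self _⟩, rfl⟩
    have := hmW i
    rw [hW] at this
    exact Set.mem_iInter₂.mp this j hji
  -- extract a convergent subsequence of φ ∘ m
  have hK : IsCompact (closure (U 0)) :=
    (hBc.isBounded.thickening).isCompact_closure
  obtain ⟨z, hzK, σ, hσ, hconv⟩ :=
    hK.tendsto_subseq (x := fun i => φ (m i))
      (fun i => subset_closure (hφm 0 i (Nat.zero_le i)))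
  -- z ∈ B
  have hzB : z ∈ B := by
    have hzU : ∀ j, z ∈ closure (U j) := by
      intro j
      refine mem_closure_of_tendsto hconv ?_
      filter_upwards [Filter.eventually_ge_atTop j] with i hi
      exact hφm j (σ i) (le_trans hi (hσ.le_apply))
    rw [← hBc.isClosed.closure_eq]
    rw [Metric.mem_closure_iff]
    intro ε hε
    obtain ⟨j, hj⟩ := exists_nat_one_div_lt (half_pos hε)
    obtain ⟨u, huU, hzu⟩ := Metric.mem_closure_iff.mp (hzU j) _ (hδpos j)
    obtain ⟨b, hbB, hub⟩ := Metric.mem_thickening_iff.mp huU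
    have htri := dist_triangle z u b
    have h1 := lt_trans hzu hj
    have h2 := lt_trans hub hj
    exact ⟨b, hbB, by linarith⟩
  -- the sequence φ' (m (σ i)) tends to y
  have htend : Tendsto (fun i => φ' (m (σ i))) atTop (𝓝 y) := by
    have h0 : Tendsto (fun i => φ' (m i)) atTop (𝓝 y) := by
      rw [Metric.tendsto_atTop]
      intro ε hε
      obtain ⟨n, hn⟩ := exists_nat_one_div_lt hε
      refine ⟨n, fun i hi => lt_of_lt_of_le (lt_of_lt_of_le (hmdist i) ?_) hn.le⟩
      refine one_div_le_one_div_of_le (by positivity) ?_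
      have : (n : ℝ) ≤ i := by exact_mod_cast hi
      linarith
    exact h0.comp hσ.tendsto_atTop
  -- the trap set
  set C : Set N' := insert y (Set.range fun i => φ' (m (σ i))) with hC
  have hCc : IsCompact C := htend.isCompact_insert_range
  have hB'C : B' ⊆ Cᶜ := by
    intro b hb
    simp only [hC, Set.mem_compl_iff, Set.mem_insert_iff, Set.mem_range, not_or]
    constructor
    · rintro rfl; exact hyB' hb
    · rintro ⟨i, rfl⟩; exact hdisj _ hb
  obtain ⟨V, hVo, hBV, hVim⟩ := h2 Cᶜ hCc.isClosed.isOpen_compl hB'C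
  -- eventually φ (m (σ i)) ∈ V, giving the contradiction
  have : ∀ᶠ i in atTop, φ (m (σ i)) ∈ V :=
    hconv.eventually (hVo.eventually_mem (hBV hzB))
  obtain ⟨i, hi⟩ := this.exists
  have hmem : φ' (m (σ i)) ∈ Cᶜ :=
    hVim ⟨m (σ i), ⟨hi, mem_range_self _⟩, rfl⟩
  exact hmem (Set.mem_insert_iff.mpr (Or.inr ⟨i, rfl⟩))
end

section
/- Let φ : M → N and φ' : M → N' be topological embeddings with open images into proper metric spaces N and N'. Let B ⊆ frontier(φ(M)) and B' ⊆ frontier(φ'(M)) be equivalent boundary sets (each covers the other). If B is compact, then B' is compact. -/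
open Set Topology Filter Metric

/-!
Covering in both directions says that the filters `comap φ' (𝓝ˢ B')` and `comap φ (𝓝ˢ B)` on
`M` coincide. Since `B` is compact, `𝓝ˢ B` is countably generated, hence so is the trace of
`𝓝ˢ B'` on `φ'(M)`. Walking down a countable basis of it, every sequence in `B'` can be shadowed
by a sequence in `φ'(M)` that is eventually inside every neighbourhood of `B'`. The shadow avoids
`B'`, so if it had no subsequence converging to a point of `B'`, its range would be a closed set
disjoint from `B'` which it never leaves. Hence `B'` is sequentially compact.
-/

theorem Covers.comap_nhdsSet_le {M N N' : Type*} [TopologicalSpace M] [TopologicalSpace N]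
    [TopologicalSpace N'] {φ : M → N} {φ' : M → N'} {B : Set N} {B' : Set N'}
    (h : Covers φ φ' B B') : comap φ' (𝓝ˢ B') ≤ comap φ (𝓝ˢ B) := by
  refine ((hasBasis_nhdsSet B).comap φ).ge_iff.2 fun U ⟨hUo, hBU⟩ => ?_
  obtain ⟨U', hU'o, hBU', hU'U⟩ := h U hUo hBU
  refine mem_of_superset (preimage_mem_comap (hU'o.mem_nhdsSet.2 hBU')) fun m hm => ?_
  exact hU'U ⟨m, ⟨hm, mem_range_self m⟩, rfl⟩

theorem IsCompact.isCountablyGenerated_nhdsSet {X : Type*} [UniformSpace X]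
    [(uniformity X).IsCountablyGenerated] {K : Set X} (hK : IsCompact K) :
    (𝓝ˢ K).IsCountablyGenerated :=
  let ⟨_, hV⟩ := (uniformity X).exists_antitone_basis
  (hK.nhdsSet_basis_uniformity hV.toHasBasis).isCountablyGenerated

theorem Covers.isCountablyGenerated_nhdsSet_inf_principal_range {M N N' : Type*}
    [TopologicalSpace M] [TopologicalSpace N] [TopologicalSpace N'] {φ : M → N} {φ' : M → N'}
    {B : Set N} {B' : Set N'} (h1 : Covers φ φ' B B') (h2 : Covers φ' φ B' B)
    [(𝓝ˢ B).IsCountablyGenerated] : (𝓝ˢ B' ⊓ 𝓟 (range φ')).IsCountablyGenerated := by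
  rw [← map_comap, le_antisymm h1.comap_nhdsSet_le h2.comap_nhdsSet_le]
  infer_instance

section Sequences

variable {X : Type*} [TopologicalSpace X] {K : Set X} {y : ℕ → X}

theorem mem_of_tendsto_nhds_of_tendsto_nhdsSet [T2Space X] {w : X}
    (hyK : ∀ n, y n ∉ K) (hy : Tendsto y atTop (𝓝ˢ K)) (hw : Tendsto y atTop (𝓝 w)) :
    w ∈ K := by
  by_contra hwK
  have hS : (insert w (range y))ᶜ ∈ 𝓝ˢ K := by
    refine hw.isCompact_insert_range.isClosed.isOpen_compl.mem_nhdsSet.2 ?_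
    rintro x hxK (rfl | ⟨n, rfl⟩)
    exacts [hwK hxK, hyK n hxK]
  obtain ⟨n, hn⟩ := (hy.eventually_mem hS).exists
  exact hn (mem_insert_of_mem _ (mem_range_self n))

theorem exists_strictMono_tendsto_of_tendsto_nhdsSet [SequentialSpace X] [T2Space X]
    (hyK : ∀ n, y n ∉ K) (hy : Tendsto y atTop (𝓝ˢ K)) :
    ∃ w ∈ K, ∃ ψ : ℕ → ℕ, StrictMono ψ ∧ Tendsto (y ∘ ψ) atTop (𝓝 w) := by
  by_contra! hno
  have hclosed : IsClosed (range y) := isClosed_range_of_not_tendsto fun w ψ hψ hw =>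
    hno w (mem_of_tendsto_nhds_of_tendsto_nhdsSet (fun n => hyK (ψ n))
      (hy.comp hψ.tendsto_atTop) hw) ψ hψ hw
  have hS : (range y)ᶜ ∈ 𝓝ˢ K := by
    refine hclosed.isOpen_compl.mem_nhdsSet.2 ?_
    rintro x hxK ⟨n, rfl⟩
    exact hyK n hxK
  obtain ⟨n, hn⟩ := (hy.eventually_mem hS).exists
  exact hn (mem_range_self n)

end Sequences

section MetricSpace

variable {X : Type*} [MetricSpace X] {K A : Set X}

theorem exists_seq_mem_tendsto_nhdsSet [(𝓝ˢ K ⊓ 𝓟 A).IsCountablyGenerated]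
    (hKA : K ⊆ closure A) {x : ℕ → X} (hx : ∀ n, x n ∈ K) :
    ∃ y : ℕ → X, (∀ n, y n ∈ A) ∧ Tendsto (fun n => dist (y n) (x n)) atTop (𝓝 0) ∧
      Tendsto y atTop (𝓝ˢ K) := by
  obtain ⟨W, hW⟩ := (𝓝ˢ K ⊓ 𝓟 A).exists_antitone_basis
  have hnear : ∀ n, ∃ z, z ∈ A ∧ z ∈ W n ∧ dist z (x n) < 1 / (n + 1) := by
    intro n
    have := mem_closure_iff_nhdsWithin_neBot.1 (hKA (hx n))
    have hle : 𝓝[A] x n ≤ 𝓝ˢ K ⊓ 𝓟 A := inf_le_inf_right _ (nhds_le_nhdsSet (hx n))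
    have hball : ball (x n) (1 / (n + 1)) ∈ 𝓝[A] x n :=
      mem_nhdsWithin_of_mem_nhds (ball_mem_nhds _ Nat.one_div_pos_of_nat)
    obtain ⟨z, hzA, hzW, hzx⟩ := Filter.nonempty_of_mem <|
      inter_mem self_mem_nhdsWithin (inter_mem (hle (hW.mem n)) hball)
    exact ⟨z, hzA, hzW, mem_ball.1 hzx⟩
  choose y hyA hyW hyx using hnear
  refine ⟨y, hyA, ?_, (hW.tendsto hyW).mono_right inf_le_left⟩
  exact squeeze_zero (fun _ => dist_nonneg) (fun n => (hyx n).le)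
    tendsto_one_div_add_atTop_nhds_zero_nat

theorem isCompact_of_isCountablyGenerated_nhdsSet_inf_principal
    [(𝓝ˢ K ⊓ 𝓟 A).IsCountablyGenerated] (hKA : K ⊆ closure A) (hdisj : Disjoint K A) :
    IsCompact K := by
  refine IsSeqCompact.isCompact fun x hx => ?_
  obtain ⟨y, hyA, hyx, hy⟩ := exists_seq_mem_tendsto_nhdsSet hKA hx
  obtain ⟨w, hwK, ψ, hψ, hyw⟩ :=
    exists_strictMono_tendsto_of_tendsto_nhdsSet (fun n => hdisj.notMem_of_mem_right (hyA n)) hy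
  exact ⟨w, hwK, ψ, hψ, hyw.congr_dist (hyx.comp hψ.tendsto_atTop)⟩

end MetricSpace

theorem isCompact_of_equiv_compact_general
    {M N N' : Type*} [TopologicalSpace M] [MetricSpace N]
    [MetricSpace N']
    {φ : M → N} {φ' : M → N'}
    (hφ'o : IsOpen (range φ'))
    {B : Set N} {B' : Set N'}
    (hB' : B' ⊆ frontier (range φ'))
    (h1 : Covers φ φ' B B') (h2 : Covers φ' φ B' B)
    (hBc : IsCompact B) :
    IsCompact B' := by
  have := hBc.isCountablyGenerated_nhdsSet
  have := h1.isCountablyGenerated_nhdsSet_inf_principal_range h2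
  rw [hφ'o.frontier_eq] at hB'
  exact isCompact_of_isCountablyGenerated_nhdsSet_inf_principal
    (fun b hb => (hB' hb).1) (disjoint_left.2 fun b hb => (hB' hb).2)

theorem isCompact_of_equiv_compact
    {M N N' : Type*} [TopologicalSpace M] [MetricSpace N] [ProperSpace N]
    [MetricSpace N'] [ProperSpace N']
    {φ : M → N} {φ' : M → N'}
    (hφ : Topology.IsEmbedding φ) (hφo : IsOpen (range φ))
    (hφ' : Topology.IsEmbedding φ') (hφ'o : IsOpen (range φ'))
    {B : Set N} {B' : Set N'}
    (hB : B ⊆ frontier (range φ)) (hB' : B' ⊆ frontier (range φ'))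
    (h1 : Covers φ φ' B B') (h2 : Covers φ' φ B' B)
    (hBc : IsCompact B) :
    IsCompact B' :=
  isCompact_of_equiv_compact_general hφ'o hB' h1 h2 hBc
end

section
/- Let φ : M → N and φ' : M → N' be topological embeddings with open images into proper metric spaces. If p ∈ frontier(φ(M)) and B' ⊆ frontier(φ'(M)) is equivalent to the singleton boundary set {p} (each covers the other), then B' is compact. -/
/-!
Given a sequence `b n ∈ B'`, pick `x n ∈ M` with `φ' (x n)` close to `b n` and `φ (x n)` close
to `p` (using that `{p}` covers `B'`). Since `B'` covers `{p}`, `φ' (x n)` converges to `B'`, and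
as `B'` misses the open set `φ'(M)` the sequence accumulates at some `q ∈ B'`, which is then also
a cluster point of `b`.
-/

open Set Topology Filter Metric

theorem Covers.exists_mem_of_mem_closure {M N N' : Type*} [TopologicalSpace M]
    [TopologicalSpace N] [TopologicalSpace N'] {φ : M → N} {φ' : M → N'} {B : Set N}
    {B' : Set N'} (h : Covers φ φ' B B') {U : Set N} (hU : IsOpen U) (hBU : B ⊆ U) {b : N'}
    (hb : b ∈ B') (hbc : b ∈ closure (range φ')) {W : Set N'} (hW : W ∈ 𝓝 b) :
    ∃ x, φ' x ∈ W ∧ φ x ∈ U := by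
  obtain ⟨V, hVo, hB'V, hVU⟩ := h U hU hBU
  obtain ⟨_, ⟨hxV, hxW⟩, x, rfl⟩ :=
    mem_closure_iff_nhds.1 hbc _ (inter_mem (hVo.mem_nhds (hB'V hb)) hW)
  exact ⟨x, hxW, hVU ⟨x, ⟨hxV, x, rfl⟩, rfl⟩⟩

theorem Covers.tendsto_nhdsSet {M N N' ι : Type*} [TopologicalSpace M] [TopologicalSpace N]
    [TopologicalSpace N'] {φ : M → N} {φ' : M → N'} {B : Set N} {B' : Set N'}
    (h : Covers φ' φ B' B) {l : Filter ι} {x : ι → M} (hx : Tendsto (φ ∘ x) l (𝓝ˢ B)) :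
    Tendsto (φ' ∘ x) l (𝓝ˢ B') := by
  refine (hasBasis_nhdsSet B').tendsto_right_iff.2 fun U ⟨hUo, hB'U⟩ => ?_
  obtain ⟨V, hVo, hBV, hVU⟩ := h U hUo hB'U
  filter_upwards [hx (hVo.mem_nhdsSet.2 hBV)] with i hi
  exact hVU ⟨x i, ⟨hi, x i, rfl⟩, rfl⟩

/-- In a `T₁` space the closure of the range of a sequence consists of its terms and its
cluster points. -/
theorem exists_mapClusterPt_of_tendsto_nhdsSet {X : Type*} [TopologicalSpace X] [T1Space X]
    {y : ℕ → X} {B : Set X} (hy : Tendsto y atTop (𝓝ˢ B)) (hyB : ∀ n, y n ∉ B) :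
    ∃ q ∈ B, MapClusterPt q atTop y := by
  by_contra! h
  have hdisj : Disjoint B (closure (range y)) := by
    refine disjoint_left.2 fun q hqB hq => ?_
    obtain ⟨i, hi⟩ : ∃ i, q ∉ closure (y '' Ici i) := by
      simpa [mapClusterPt_atTop_iff_forall_mem_closure] using h q hqB
    have hsplit : range y ⊆ y '' Iio i ∪ y '' Ici i := by
      rw [← image_union, Iio_union_Ici, image_univ]
    have hq' := closure_mono hsplit hq
    rw [closure_union, ((finite_Iio i).image y).isClosed.closure_eq] at hq'
    rcases hq' with ⟨n, -, rfl⟩ | hq'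
    exacts [hyB n hqB, hi hq']
  obtain ⟨n, hn⟩ :=
    (hy.eventually (isClosed_closure.isOpen_compl.mem_nhdsSet.2 hdisj.subset_compl_right)).exists
  exact hn (subset_closure (mem_range_self n))

theorem tendsto_dist_zero_of_dist_lt_one_div {X : Type*} [PseudoMetricSpace X] {u v : ℕ → X}
    (h : ∀ n : ℕ, dist (u n) (v n) < 1 / (n + 1)) :
    Tendsto (fun n => dist (u n) (v n)) atTop (𝓝 0) :=
  squeeze_zero (fun _ => dist_nonneg) (fun n => (h n).le) tendsto_one_div_add_atTop_nhds_zero_nat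

theorem isCompact_of_equiv_singleton_general
    {M N N' : Type*} [TopologicalSpace M] [MetricSpace N]
    [MetricSpace N']
    {φ : M → N} {φ' : M → N'}
    (hφ'o : IsOpen (range φ'))
    {p : N}
    {B' : Set N'} (hB' : B' ⊆ frontier (range φ'))
    (h1 : Covers φ φ' {p} B') (h2 : Covers φ' φ B' {p}) :
    IsCompact B' := by
  refine IsSeqCompact.isCompact fun b hb => ?_
  have hε (n : ℕ) : (0 : ℝ) < 1 / (n + 1) := Nat.one_div_pos_of_nat
  choose x hxb hxp using fun n => h1.exists_mem_of_mem_closure isOpen_ball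
    (singleton_subset_iff.2 (mem_ball_self (hε n))) (hb n)
    (frontier_subset_closure (hB' (hb n))) (ball_mem_nhds (b n) (hε n))
  have hφx : Tendsto (φ ∘ x) atTop (𝓝ˢ {p}) := by
    rw [nhdsSet_singleton, tendsto_iff_dist_tendsto_zero]
    exact tendsto_dist_zero_of_dist_lt_one_div hxp
  obtain ⟨q, hqB', hq⟩ := exists_mapClusterPt_of_tendsto_nhdsSet (h2.tendsto_nhdsSet hφx)
    fun n hn => hφ'o.inter_frontier_eq.subset ⟨mem_range_self (x n), hB' hn⟩
  obtain ⟨ψ, hψ, hψq⟩ := hq.tendsto_subseq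
  exact ⟨q, hqB', ψ, hψ, hψq.congr_dist <|
    (tendsto_dist_zero_of_dist_lt_one_div hxb).comp hψ.tendsto_atTop⟩

theorem isCompact_of_equiv_singleton
    {M N N' : Type*} [TopologicalSpace M] [MetricSpace N] [ProperSpace N]
    [MetricSpace N'] [ProperSpace N']
    {φ : M → N} {φ' : M → N'}
    (hφ : Topology.IsEmbedding φ) (hφo : IsOpen (range φ))
    (hφ' : Topology.IsEmbedding φ') (hφ'o : IsOpen (range φ'))
    {p : N} (hp : p ∈ frontier (range φ))
    {B' : Set N'} (hB' : B' ⊆ frontier (range φ'))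
    (h1 : Covers φ φ' {p} B') (h2 : Covers φ' φ B' {p}) :
    IsCompact B' :=
  isCompact_of_equiv_singleton_general hφ'o hB' h1 h2
end

section
/- Closedness of boundary sets is not invariant under boundary set equivalence: there exist a topological space M, topological embeddings φ : M → N and φ' : M → N' with open images into metric spaces, and boundary sets B ⊆ frontier(φ(M)) and B' ⊆ frontier(φ'(M)) that are equivalent (each covers the other), such that B is closed in N but B' is not closed in N'. Concretely, one may take M = {(x,y,z) ∈ ℝ³ : z < 0}, N = N' = ℝ³, φ the inclusion (so B = frontier(φ(M)) is the plane {z = 0}), and φ' a homeomorphism of M onto the open box {|x| < 1, |y| < 1, −1 < z < 0} (e.g. φ'(x,y,z) = (tanh x, tanh y, (2/π)·arctan z)), for which B' = frontier(φ'(M)) ∩ {z = 0} = {(x,y,0) : |x| < 1, |y| < 1} is equivalent to B but not closed. -/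
open Set Topology Filter Metric

/-!
Take `φ` the inclusion of the lower half-space `M` into `ℝ³` and `φ' = T ∘ φ`, where `T` is an
open self-embedding of `ℝ³` with bounded range (squeeze every coordinate into `(-1, 1)`).
Transporting a boundary set `B` of `φ` along `T` gives an equivalent boundary set `T(B)` of `φ'`,
for any open embedding `T`. For `B` the plane `z = 0`, which is closed, `T(B)` is a bounded copy
of the non-compact plane, so it cannot be closed in the proper space `ℝ³`.
-/

section Transport

variable {M N N' : Type*} [TopologicalSpace M] [TopologicalSpace N] [TopologicalSpace N']
  {T : N → N'}

theorem Continuous.image_frontier_subset_frontier_image (hT : Continuous T)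
    (hinj : T.Injective) (s : Set N) : T '' frontier s ⊆ frontier (T '' s) := by
  rintro _ ⟨x, ⟨hxs, hxi⟩, rfl⟩
  refine ⟨image_closure_subset_closure_image hT ⟨x, hxs, rfl⟩, fun hTx => hxi ?_⟩
  have hsub : T ⁻¹' interior (T '' s) ⊆ s :=
    (preimage_mono interior_subset).trans (hinj.preimage_image s).subset
  exact interior_maximal hsub (isOpen_interior.preimage hT) hTx

theorem covers_comp_image (hT : IsOpenMap T) (hinj : T.Injective) (φ : M → N) (B : Set N) :
    Covers φ (T ∘ φ) B (T '' B) := by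
  intro U hU hBU
  refine ⟨T '' U, hT U hU, image_mono hBU, ?_⟩
  rintro _ ⟨m, ⟨⟨u, hu, hTu⟩, -⟩, rfl⟩
  exact hinj hTu ▸ hu

theorem covers_image_comp (hT : Continuous T) (φ : M → N) (B : Set N) :
    Covers (T ∘ φ) φ (T '' B) B := by
  intro U hU hBU
  refine ⟨T ⁻¹' U, hU.preimage hT, image_subset_iff.mp hBU, ?_⟩
  rintro _ ⟨m, ⟨hm, -⟩, rfl⟩
  exact hm

end Transport

theorem not_isClosed_image_of_not_isCompact {X Y : Type*} [TopologicalSpace X]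
    [PseudoMetricSpace Y] [ProperSpace Y] {T : X → Y} (hT : IsEmbedding T)
    (hbdd : Bornology.IsBounded (range T)) {s : Set X} (hs : ¬ IsCompact s) :
    ¬ IsClosed (T '' s) := fun hcl =>
  hs <| hT.isCompact_iff.mpr <|
    isCompact_of_isClosed_isBounded hcl (hbdd.subset (image_subset_range T s))

theorem frontier_setOf_apply_lt_zero {ι : Type*} (i : ι) :
    frontier {v : ι → ℝ | v i < 0} = {v | v i = 0} := by
  have h := (isOpenMap_eval (X := fun _ : ι => ℝ) i).preimage_frontier_eq_frontier_preimage
    (continuous_apply i) (Iio 0)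
  rw [frontier_Iio] at h
  exact h.symm

theorem not_isCompact_setOf_apply_eq_zero {ι : Type*} [DecidableEq ι] {i j : ι} (hij : j ≠ i) :
    ¬ IsCompact {v : ι → ℝ | v i = 0} := fun hc => by
  have hsurj : (fun v : ι → ℝ => v j) '' {v | v i = 0} = univ :=
    eq_univ_of_forall fun t => ⟨Pi.single j t, by simp [hij.symm], by simp⟩
  exact noncompact_univ ℝ (hsurj ▸ hc.image (continuous_apply j))

noncomputable def squeeze (x : ℝ) : ℝ := orderIsoIooNegOneOne ℝ x

theorem isOpenEmbedding_squeeze : IsOpenEmbedding squeeze :=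
  isOpen_Ioo.isOpenEmbedding_subtypeVal.comp
    (orderIsoIooNegOneOne ℝ).toHomeomorph.isOpenEmbedding

theorem isBounded_range_piMap_squeeze (ι : Type*) [Fintype ι] :
    Bornology.IsBounded (range (Pi.map fun _ : ι => squeeze)) := by
  refine (isBounded_closedBall (x := (0 : ι → ℝ)) (r := 1)).subset ?_
  rintro _ ⟨v, rfl⟩
  rw [mem_closedBall, dist_zero_right, pi_norm_le_iff_of_nonneg zero_le_one]
  exact fun i => abs_le.mpr (Ioo_subset_Icc_self (orderIsoIooNegOneOne ℝ (v i)).2)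

theorem closedness_not_invariant :
    ∃ (φ φ' : {v : Fin 3 → ℝ // v 2 < 0} → (Fin 3 → ℝ)) (B B' : Set (Fin 3 → ℝ)),
      Topology.IsEmbedding φ ∧ IsOpen (range φ) ∧
      Topology.IsEmbedding φ' ∧ IsOpen (range φ') ∧
      B ⊆ frontier (range φ) ∧ B' ⊆ frontier (range φ') ∧
      Covers φ φ' B B' ∧ Covers φ' φ B' B ∧
      IsClosed B ∧ ¬ IsClosed B' := by
  set T : (Fin 3 → ℝ) → Fin 3 → ℝ := Pi.map fun _ => squeeze
  have hT : IsOpenEmbedding T := .piMap fun _ => isOpenEmbedding_squeeze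
  have hφ : IsOpenEmbedding (Subtype.val : {v : Fin 3 → ℝ // v 2 < 0} → Fin 3 → ℝ) :=
    (isOpen_lt (continuous_apply 2) continuous_const).isOpenEmbedding_subtypeVal
  have hB : frontier (range (Subtype.val : {v : Fin 3 → ℝ // v 2 < 0} → Fin 3 → ℝ)) =
      {v | v 2 = 0} := by
    rw [Subtype.range_coe_subtype, frontier_setOf_apply_lt_zero]
  refine ⟨Subtype.val, T ∘ Subtype.val, {v | v 2 = 0}, T '' {v | v 2 = 0},
    hφ.isEmbedding, hφ.isOpen_range, (hT.comp hφ).isEmbedding, (hT.comp hφ).isOpen_range,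
    hB.ge, ?_, covers_comp_image hT.isOpenMap hT.injective _ _,
    covers_image_comp hT.continuous _ _, isClosed_eq (continuous_apply 2) continuous_const,
    not_isClosed_image_of_not_isCompact hT.isEmbedding (isBounded_range_piMap_squeeze _)
      (not_isCompact_setOf_apply_eq_zero (j := 0) (by decide))⟩
  rw [range_comp, ← hB]
  exact hT.continuous.image_frontier_subset_frontier_image hT.injective _
end

section
/- Let F be a closed subset of a metric space X. The collection of connected components of F is locally finite in X (every point of X has an open neighbourhood meeting only finitely many components) if and only if there exists a family of pairwise disjoint open subsets of X, one containing each component of F. -/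
/-!
Distinct components of `F` are disjoint, and closed because `F` is. If they form a locally finite
family, the union of all components other than `c` is closed and misses `c`, so
`{x | infEDist x c < infEDist x (⋃ c' ≠ c, c')}` is an open neighbourhood of `c`; two such sets
for `c ≠ c'` cannot meet, as each side of one inequality bounds a side of the other. Conversely,
disjoint open neighbourhoods `U c` make the family locally finite: a point of `F` lies in some
`U c`, which meets no other component, and `Fᶜ` is an open neighbourhood of every other point.
-/

open Set Topology Metric Function

section InfEDist

variable {X : Type*} [PseudoEMetricSpace X]

theorem isOpen_setOf_infEDist_lt_infEDist (s t : Set X) :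
    IsOpen {x | infEDist x s < infEDist x t} :=
  isOpen_lt continuous_infEDist continuous_infEDist

theorem subset_setOf_infEDist_lt_infEDist {s t : Set X} (ht : IsClosed t) (hst : Disjoint s t) :
    s ⊆ {x | infEDist x s < infEDist x t} := by
  intro x hx
  rw [mem_ofPred_eq, infEDist_zero_of_mem hx, infEDist_pos_iff_notMem_closure, ht.closure_eq]
  exact hst.notMem_of_mem_left hx

theorem disjoint_setOf_infEDist_lt_infEDist {s t s' t' : Set X} (hs : s ⊆ t') (hs' : s' ⊆ t) :
    Disjoint {x | infEDist x s < infEDist x t} {x | infEDist x s' < infEDist x t'} := by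
  refine disjoint_left.2 fun x (hx : infEDist x s < infEDist x t) hx' => ?_
  have : infEDist x s' < infEDist x s' :=
    calc infEDist x s' < infEDist x t' := hx'
      _ ≤ infEDist x s := infEDist_anti hs
      _ < infEDist x t := hx
      _ ≤ infEDist x s' := infEDist_anti hs'
  exact this.false

theorem LocallyFinite.exists_open_superset_pairwise_disjoint {ι : Type*} {s : ι → Set X}
    (hlf : LocallyFinite s) (hclosed : ∀ i, IsClosed (s i)) (hdisj : Pairwise (Disjoint on s)) :
    ∃ U : ι → Set X, (∀ i, IsOpen (U i) ∧ s i ⊆ U i) ∧ Pairwise (Disjoint on U) := by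
  let others (i : ι) : Set X := ⋃ j : {j // j ≠ i}, s j
  have others_closed (i : ι) : IsClosed (others i) :=
    (hlf.comp_injective Subtype.val_injective).isClosed_iUnion fun j => hclosed j
  have disjoint_others (i : ι) : Disjoint (s i) (others i) :=
    disjoint_iUnion_right.2 fun j => hdisj j.2.symm
  have subset_others {i j : ι} (hij : i ≠ j) : s j ⊆ others i :=
    subset_iUnion_of_subset ⟨j, hij.symm⟩ subset_rfl
  refine ⟨fun i => {x | infEDist x (s i) < infEDist x (others i)}, fun i => ⟨?_, ?_⟩, ?_⟩
  · exact isOpen_setOf_infEDist_lt_infEDist _ _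
  · exact subset_setOf_infEDist_lt_infEDist (others_closed i) (disjoint_others i)
  · intro i j hij
    exact disjoint_setOf_infEDist_lt_infEDist (subset_others hij.symm) (subset_others hij)

end InfEDist

theorem LocallyFinite.of_open_superset_pairwise_disjoint {X ι : Type*} [TopologicalSpace X]
    {s U : ι → Set X} (hs : IsClosed (⋃ i, s i)) (hU : ∀ i, IsOpen (U i) ∧ s i ⊆ U i)
    (hdisj : Pairwise (Disjoint on U)) : LocallyFinite s := by
  intro x
  by_cases hx : x ∈ ⋃ i, s i
  · obtain ⟨i, hxi⟩ := mem_iUnion.1 hx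
    refine ⟨U i, (hU i).1.mem_nhds ((hU i).2 hxi), (finite_singleton i).subset fun j hj => ?_⟩
    by_contra hji
    obtain ⟨y, hyj, hyi⟩ := hj
    exact (hdisj hji).notMem_of_mem_left ((hU j).2 hyj) hyi
  · refine ⟨(⋃ i, s i)ᶜ, hs.isOpen_compl.mem_nhds hx, finite_empty.subset fun j hj => ?_⟩
    obtain ⟨y, hyj, hy⟩ := hj
    exact hy (mem_iUnion_of_mem j hyj)

section ConnectedComponentIn

variable {X : Type*} [TopologicalSpace X] {F : Set X}

theorem IsClosed.connectedComponentIn (hF : IsClosed F) (x : X) :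
    IsClosed (connectedComponentIn F x) := by
  by_cases hx : x ∈ F
  · rw [connectedComponentIn_eq_image hx]
    exact hF.isClosedEmbedding_subtypeVal.isClosedMap _ isClosed_connectedComponent
  · rw [connectedComponentIn_eq_empty hx]
    exact isClosed_empty

theorem pairwise_disjoint_connectedComponentIn :
    Pairwise (Disjoint on
      fun c : {s : Set X // ∃ x ∈ F, s = connectedComponentIn F x} => (c : Set X)) := by
  intro ⟨_, x, _, hx⟩ ⟨_, y, _, hy⟩ hne
  subst hx hy
  refine disjoint_left.2 fun z hzx hzy => hne ?_
  exact Subtype.ext ((connectedComponentIn_eq hzx).trans (connectedComponentIn_eq hzy).symm)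

theorem iUnion_connectedComponentIn :
    ⋃ c : {s : Set X // ∃ x ∈ F, s = connectedComponentIn F x}, (c : Set X) = F := by
  refine Subset.antisymm (iUnion_subset ?_) fun x hx => ?_
  · rintro ⟨_, x, -, rfl⟩
    exact connectedComponentIn_subset F x
  · exact mem_iUnion_of_mem ⟨_, x, hx, rfl⟩ (mem_connectedComponentIn hx)

end ConnectedComponentIn

theorem locallyFinite_components_iff_disjoint_opens
    {X : Type*} [MetricSpace X] {F : Set X} (hF : IsClosed F) :
    LocallyFinite
        (fun c : {s : Set X // ∃ x ∈ F, s = connectedComponentIn F x} => (c : Set X)) ↔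
      ∃ U : {s : Set X // ∃ x ∈ F, s = connectedComponentIn F x} → Set X,
        (∀ c, IsOpen (U c) ∧ (c : Set X) ⊆ U c) ∧
        Pairwise (Function.onFun Disjoint U) := by
  refine ⟨fun hlf => hlf.exists_open_superset_pairwise_disjoint ?_
      pairwise_disjoint_connectedComponentIn, fun ⟨U, hU, hdisj⟩ =>
      .of_open_superset_pairwise_disjoint ?_ hU hdisj⟩
  · rintro ⟨_, x, -, rfl⟩
    exact hF.connectedComponentIn x
  · rwa [iUnion_connectedComponentIn]
end

section
/- Let φ : M → N and φ' : M → N' be topological embeddings with open images into proper metric spaces, and let B ⊆ frontier(φ(M)) and B' ⊆ frontier(φ'(M)) be equivalent boundary sets (each covers the other). If B is isolated (B is compact and there is an open U in N with U ∩ frontier(φ(M)) = B), then B' is also isolated (B' is compact and there is an open U' in N' with U' ∩ frontier(φ'(M)) = B'). -/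
open Set Topology Filter Metric

theorem isolated_invariant
    {M N N' : Type*} [TopologicalSpace M] [MetricSpace N] [ProperSpace N]
    [MetricSpace N'] [ProperSpace N']
    {φ : M → N} {φ' : M → N'}
    (hφ : Topology.IsEmbedding φ) (hφo : IsOpen (range φ))
    (hφ' : Topology.IsEmbedding φ') (hφ'o : IsOpen (range φ'))
    {B : Set N} {B' : Set N'}
    (hB : B ⊆ frontier (range φ)) (hB' : B' ⊆ frontier (range φ'))
    (h1 : Covers φ φ' B B') (h2 : Covers φ' φ B' B)
    (hBc : IsCompact B)
    (hiso : ∃ U : Set N, IsOpen U ∧ U ∩ frontier (range φ) = B) :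
    IsCompact B' ∧ ∃ U' : Set N', IsOpen U' ∧ U' ∩ frontier (range φ') = B' := by
  classical
  obtain ⟨U, hUo, hUB⟩ := hiso
  have hBU : B ⊆ U := by rw [← hUB]; exact inter_subset_left
  obtain ⟨δ, hδpos, hK⟩ := hBc.exists_cthickening_subset_open hUo hBU
  have hKc : IsCompact (cthickening δ B) := hBc.cthickening
  obtain ⟨U', hU'o, hB'U', himg⟩ :=
    h1 (thickening δ B) isOpen_thickening (self_subset_thickening hδpos B)
  -- points of the frontiers are not in the images
  have hΩ'front : ∀ x ∈ frontier (range φ'), x ∉ range φ' := by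
    intro x hx
    rw [hφ'o.frontier_eq] at hx
    exact hx.2
  -- a small separation helper
  have sep : ∀ (w : ℕ → N') (b : N') (ρ₀ : ℝ) (J : ℕ), 0 < ρ₀ →
      (∀ j, 0 < dist (w j) b) → (∀ j, J ≤ j → ρ₀ ≤ dist (w j) b) →
      ∃ ρ > 0, ∀ j, ρ ≤ dist (w j) b := by
    intro w b ρ₀ J hρ₀ hpos hfar
    set F : Finset ℝ := insert ρ₀ ((Finset.range J).image fun j => dist (w j) b) with hF
    have hFne : F.Nonempty := Finset.insert_nonempty _ _
    refine ⟨F.min' hFne, ?_, ?_⟩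
    · rw [gt_iff_lt, Finset.lt_min'_iff]
      intro y hy
      rw [hF, Finset.mem_insert] at hy
      rcases hy with rfl | hy
      · exact hρ₀
      · obtain ⟨j, _, rfl⟩ := Finset.mem_image.mp hy
        exact hpos j
    · intro j
      rcases lt_or_ge j J with hj | hj
      · exact F.min'_le _ (Finset.mem_insert_of_mem
          (Finset.mem_image.mpr ⟨j, Finset.mem_range.mpr hj, rfl⟩))
      · exact le_trans (F.min'_le _ (Finset.mem_insert_self _ _)) (hfar j hj)
  -- the core contradiction machine, using h2
  have core : ∀ (m : ℕ → M) (y : N), y ∈ B →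
      Tendsto (fun j => φ (m j)) atTop (𝓝 y) →
      (∀ b ∈ B', ∃ ρ > 0, ∀ j, ρ ≤ dist (φ' (m j)) b) → False := by
    intro m y hyB hty hsep
    choose ρ hρpos hρ using hsep
    set W : Set N' := ⋃ (b : N') (hb : b ∈ B'), ball b (ρ b hb) with hW
    have hWo : IsOpen W := isOpen_iUnion fun b => isOpen_iUnion fun hb => isOpen_ball
    have hB'W : B' ⊆ W := fun b hb =>
      mem_iUnion.mpr ⟨b, mem_iUnion.mpr ⟨hb, mem_ball_self (hρpos b hb)⟩⟩
    obtain ⟨W', hW'o, hBW', himg2⟩ := h2 W hWo hB'W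
    have hev : ∀ᶠ j in atTop, φ (m j) ∈ W' := hty (hW'o.mem_nhds (hBW' hyB))
    obtain ⟨j, hj⟩ := hev.exists
    have hmem : φ' (m j) ∈ W := himg2 ⟨m j, ⟨hj, mem_range_self _⟩, rfl⟩
    rw [hW] at hmem
    simp only [mem_iUnion] at hmem
    obtain ⟨b, hb, hball⟩ := hmem
    exact (hρ b hb j).not_gt (mem_ball.mp hball)
  -- the subsequence extraction machine, using h1 (via U', himg)
  have setup : ∀ m : ℕ → M, (∀ k, φ' (m k) ∈ U') →
      ∃ σ : ℕ → ℕ, StrictMono σ ∧ ∃ y,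
        Tendsto (fun j => φ (m (σ j))) atTop (𝓝 y) ∧
        ((∃ m₀, Tendsto (fun j => φ' (m (σ j))) atTop (𝓝 (φ' m₀))) ∨ y ∈ B) := by
    intro m hm
    have hmV : ∀ k, φ (m k) ∈ cthickening δ B := fun k =>
      thickening_subset_cthickening δ B (himg ⟨m k, ⟨hm k, mem_range_self _⟩, rfl⟩)
    obtain ⟨y, hy, σ, hσ, hty⟩ := hKc.tendsto_subseq hmV
    have hty' : Tendsto (fun j => φ (m (σ j))) atTop (𝓝 y) := hty
    refine ⟨σ, hσ, y, hty', ?_⟩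
    by_cases hyΩ : y ∈ range φ
    · obtain ⟨m₀, rfl⟩ := hyΩ
      left
      refine ⟨m₀, (hφ'.continuous.tendsto m₀).comp ?_⟩
      exact hφ.tendsto_nhds_iff.mpr hty'
    · right
      have hycl : y ∈ closure (range φ) :=
        mem_closure_of_tendsto hty' (Eventually.of_forall fun j => mem_range_self _)
      have hyf : y ∈ frontier (range φ) := by
        rw [hφo.frontier_eq]; exact ⟨hycl, hyΩ⟩
      rw [← hUB]
      exact ⟨hK hy, hyf⟩
  -- the key claim
  have claimC : closure (U' ∩ range φ') ∩ frontier (range φ') ⊆ B' := by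
    rintro x' ⟨hx'cl, hx'f⟩
    by_contra hx'B'
    obtain ⟨z, hz, hzt⟩ := mem_closure_iff_seq_limit.mp hx'cl
    choose m hmφ using fun j => (hz j).2
    have hmU' : ∀ j, φ' (m j) ∈ U' := fun j => by rw [hmφ]; exact (hz j).1
    obtain ⟨σ, hσ, y, hty, hcase⟩ := setup m hmU'
    have hwt : Tendsto (fun j => φ' (m (σ j))) atTop (𝓝 x') := by
      have h := hzt.comp hσ.tendsto_atTop
      have : (fun j => φ' (m (σ j))) = z ∘ σ := by
        funext j; exact hmφ (σ j)
      rw [this]; exact h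
    rcases hcase with ⟨m₀, htm⟩ | hyB
    · refine hΩ'front x' hx'f ?_
      rw [tendsto_nhds_unique hwt htm]
      exact mem_range_self m₀
    · refine core (fun j => m (σ j)) y hyB hty ?_
      intro b hb
      have hd : 0 < dist x' b := dist_pos.mpr fun h => hx'B' (h ▸ hb)
      obtain ⟨J, hJ⟩ := Metric.tendsto_atTop.mp hwt (dist x' b / 2) (half_pos hd)
      refine sep _ b (dist x' b / 2) J (half_pos hd)
        (fun j => dist_pos.mpr fun h => (hΩ'front b (hB' hb)) (h ▸ mem_range_self _)) ?_
      intro j hj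
      have h1' := hJ j hj
      have h2' := dist_triangle x' (φ' (m (σ j))) b
      have h3' := dist_comm x' (φ' (m (σ j)))
      linarith
  -- B' is exactly the closed set `closure (U' ∩ Ω') ∩ frontier Ω'`
  have hB'sub : B' ⊆ closure (U' ∩ range φ') ∩ frontier (range φ') := by
    intro b hb
    exact ⟨hU'o.inter_closure ⟨hB'U' hb, frontier_subset_closure (hB' hb)⟩, hB' hb⟩
  have hB'eq : B' = closure (U' ∩ range φ') ∩ frontier (range φ') :=
    Subset.antisymm hB'sub claimC
  have hB'closed : IsClosed B' := by
    rw [hB'eq]; exact isClosed_closure.inter isClosed_frontier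
  have hiso' : U' ∩ frontier (range φ') = B' := by
    refine Subset.antisymm ?_ (subset_inter hB'U' hB')
    intro x hx
    exact claimC ⟨hU'o.inter_closure ⟨hx.1, frontier_subset_closure hx.2⟩, hx.2⟩
  -- boundedness of B'
  have hB'bdd : Bornology.IsBounded B' := by
    by_contra hnb
    have hne : B'.Nonempty := by
      rcases eq_empty_or_nonempty B' with h | h
      · exact absurd (h ▸ Bornology.isBounded_empty) hnb
      · exact h
    obtain ⟨b₀, hb₀⟩ := hne
    have hbig : ∀ k : ℕ, ∃ b ∈ B', (k : ℝ) < dist b b₀ := by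
      intro k
      by_contra hc
      push_neg at hc
      exact hnb ((isBounded_closedBall (x := b₀) (r := k)).subset
        fun b hb => mem_closedBall.mpr (hc b hb))
    choose b hbB hbd using hbig
    have hnear : ∀ k, ∃ p, p ∈ U' ∩ range φ' ∧ dist p (b k) < 1 := by
      intro k
      have hcl : b k ∈ closure (range φ') := frontier_subset_closure (hB' (hbB k))
      have hnhds : ball (b k) 1 ∩ U' ∈ 𝓝 (b k) :=
        inter_mem (ball_mem_nhds _ one_pos) (hU'o.mem_nhds (hB'U' (hbB k)))
      obtain ⟨p, hp1, hp2⟩ := mem_closure_iff_nhds.mp hcl _ hnhds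
      exact ⟨p, ⟨hp1.2, hp2⟩, mem_ball.mp hp1.1⟩
    choose z hzU hzd using hnear
    choose m hmφ using fun k => (hzU k).2
    have hmU' : ∀ k, φ' (m k) ∈ U' := fun k => by rw [hmφ]; exact (hzU k).1
    obtain ⟨σ, hσ, y, hty, hcase⟩ := setup m hmU'
    have hgrow : ∀ j : ℕ, (j : ℝ) - 1 < dist (φ' (m (σ j))) b₀ := by
      intro j
      have h1' : ((σ j : ℕ) : ℝ) < dist (b (σ j)) b₀ := hbd (σ j)
      have h2' : dist (φ' (m (σ j))) (b (σ j)) < 1 := by rw [hmφ]; exact hzd (σ j)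
      have h3' : (j : ℝ) ≤ ((σ j : ℕ) : ℝ) := by exact_mod_cast hσ.le_apply
      have h4' := dist_triangle (b (σ j)) (φ' (m (σ j))) b₀
      have h5' := dist_comm (b (σ j)) (φ' (m (σ j)))
      linarith
    rcases hcase with ⟨m₀, htm⟩ | hyB
    · obtain ⟨J, hJ⟩ := Metric.tendsto_atTop.mp htm 1 one_pos
      set D := dist (φ' m₀) b₀ with hD
      set j := max J (⌈D⌉₊ + 3) with hjdef
      have hj1 : J ≤ j := le_max_left _ _
      have hj2 : (⌈D⌉₊ + 3 : ℕ) ≤ j := le_max_right _ _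
      have h1' := hJ j hj1
      have h2' := hgrow j
      have h3' : ((⌈D⌉₊ + 3 : ℕ) : ℝ) ≤ (j : ℝ) := by exact_mod_cast hj2
      have h4' : D ≤ (⌈D⌉₊ : ℝ) := Nat.le_ceil D
      have h5' := dist_triangle (φ' (m (σ j))) (φ' m₀) b₀
      have h6' : ((⌈D⌉₊ + 3 : ℕ) : ℝ) = (⌈D⌉₊ : ℝ) + 3 := by push_cast; ring
      linarith
    · refine core (fun j => m (σ j)) y hyB hty ?_
      intro c hc
      set Dc := dist c b₀ with hDc
      have hfar : ∀ j, (⌈Dc⌉₊ + 2) ≤ j → (1 : ℝ) ≤ dist (φ' (m (σ j))) c := by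
        intro j hj
        have h1' := hgrow j
        have h2' : ((⌈Dc⌉₊ + 2 : ℕ) : ℝ) ≤ (j : ℝ) := by exact_mod_cast hj
        have h3' : Dc ≤ (⌈Dc⌉₊ : ℝ) := Nat.le_ceil Dc
        have h4' := dist_triangle (φ' (m (σ j))) c b₀
        have h5' : ((⌈Dc⌉₊ + 2 : ℕ) : ℝ) = (⌈Dc⌉₊ : ℝ) + 2 := by push_cast; ring
        linarith
      have hpos : ∀ j, 0 < dist (φ' (m (σ j))) c := fun j =>
        dist_pos.mpr fun h => (hΩ'front c (hB' hc)) (h ▸ mem_range_self _)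
      exact sep _ c 1 (⌈Dc⌉₊ + 2) one_pos hpos hfar
  exact ⟨Metric.isCompact_of_isClosed_isBounded hB'closed hB'bdd, U', hU'o, hiso'⟩
end

section
/- Let φ : M → N be a topological embedding with open image into a metric space N, and let B ⊆ frontier(φ(M)). Say that B satisfies the connected neighbourhood property (CNP) if every open set U ⊇ B in N contains an open set V ⊇ B such that V ∩ φ(M) is connected. If B satisfies the CNP, then B is connected. -/
open Set Topology Filter Metric

/-- Separated sets in a metric space have disjoint open neighbourhoods. -/
lemma separated_of_disjoint_closure {N : Type*} [MetricSpace N] {s t : Set N}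
    (h1 : Disjoint (closure s) t) (h2 : Disjoint s (closure t))
    (hs : s.Nonempty) (ht : t.Nonempty) :
    ∃ V₁ V₂ : Set N, IsOpen V₁ ∧ IsOpen V₂ ∧ s ⊆ V₁ ∧ t ⊆ V₂ ∧ Disjoint V₁ V₂ := by
  let f : N → ℝ := fun x => Metric.infDist x s - Metric.infDist x t
  have hf : f = fun x => Metric.infDist x s - Metric.infDist x t := rfl
  have hfc : Continuous f := (Metric.continuous_infDist_pt s).sub (Metric.continuous_infDist_pt t)
  refine ⟨f ⁻¹' Set.Iio 0, f ⁻¹' Set.Ioi 0, isOpen_Iio.preimage hfc, isOpen_Ioi.preimage hfc,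
    ?_, ?_, ?_⟩
  · intro x hx
    have h0 : Metric.infDist x s = 0 := Metric.infDist_zero_of_mem hx
    have hpos : 0 < Metric.infDist x t := by
      rcases lt_or_eq_of_le (Metric.infDist_nonneg (s := t) (x := x)) with h | h
      · exact h
      · exact absurd ((Metric.mem_closure_iff_infDist_zero ht).mpr h.symm)
          (Set.disjoint_left.mp h2 hx)
    simp only [Set.mem_preimage, Set.mem_Iio, hf]
    linarith
  · intro x hx
    have h0 : Metric.infDist x t = 0 := Metric.infDist_zero_of_mem hx
    have hpos : 0 < Metric.infDist x s := by
      rcases lt_or_eq_of_le (Metric.infDist_nonneg (s := s) (x := x)) with h | h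
      · exact h
      · exact absurd ((Metric.mem_closure_iff_infDist_zero hs).mpr h.symm)
          (Set.disjoint_right.mp h1 hx)
    simp only [Set.mem_preimage, Set.mem_Ioi, hf]
    linarith
  · rw [Set.disjoint_left]
    intro x hx hx'
    simp only [Set.mem_preimage, Set.mem_Iio, Set.mem_Ioi] at hx hx'
    linarith

theorem cnp_implies_connected
    {M N : Type*} [TopologicalSpace M] [MetricSpace N]
    {φ : M → N}
    (hφ : Topology.IsEmbedding φ) (hφo : IsOpen (range φ))
    {B : Set N} (hB : B ⊆ frontier (range φ))
    (hcnp : ∀ U : Set N, IsOpen U → B ⊆ U →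
      ∃ V : Set N, IsOpen V ∧ B ⊆ V ∧ V ⊆ U ∧ IsConnected (V ∩ range φ)) :
    IsConnected B := by
  constructor
  · -- B is nonempty
    by_contra hne
    rw [not_nonempty_iff_eq_empty] at hne
    obtain ⟨V, hVo, hBV, hVsub, hVc⟩ := hcnp ∅ isOpen_empty (by simp [hne])
    have : V ∩ range φ = ∅ := by
      have : V = ∅ := eq_empty_of_subset_empty hVsub
      simp [this]
    exact hVc.nonempty.ne_empty this
  · -- B is preconnected
    intro u v hu hv hsub ⟨a, haB, hau⟩ ⟨b, hbB, hbv⟩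
    by_contra hempty
    rw [not_nonempty_iff_eq_empty] at hempty
    -- the pieces B ∩ u and B ∩ v are separated
    have hsep1 : Disjoint (closure (B ∩ u)) (B ∩ v) := by
      rw [Set.disjoint_left]
      rintro x hxc ⟨hxB, hxv⟩
      obtain ⟨y, hy⟩ := mem_closure_iff.mp hxc v hv hxv
      have : y ∈ B ∩ (u ∩ v) := ⟨hy.2.1, hy.2.2, hy.1⟩
      rw [hempty] at this; exact this
    have hsep2 : Disjoint (B ∩ u) (closure (B ∩ v)) := by
      rw [Set.disjoint_left]
      rintro x ⟨hxB, hxu⟩ hxc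
      obtain ⟨y, hy⟩ := mem_closure_iff.mp hxc u hu hxu
      have : y ∈ B ∩ (u ∩ v) := ⟨hy.2.1, hy.1, hy.2.2⟩
      rw [hempty] at this; exact this
    obtain ⟨V₁, V₂, hV₁o, hV₂o, hBuV₁, hBvV₂, hdisj⟩ :=
      separated_of_disjoint_closure hsep1 hsep2 ⟨a, haB, hau⟩ ⟨b, hbB, hbv⟩
    have hBU : B ⊆ V₁ ∪ V₂ := fun x hx => by
      rcases hsub hx with h | h
      · exact Or.inl (hBuV₁ ⟨hx, h⟩)
      · exact Or.inr (hBvV₂ ⟨hx, h⟩)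
    obtain ⟨V, hVo, hBV, hVsub, hVc⟩ := hcnp (V₁ ∪ V₂) (hV₁o.union hV₂o) hBU
    have hVrsub : V ∩ range φ ⊆ V₁ ∪ V₂ := fun x hx => hVsub hx.1
    -- a point of B in V₁ or V₂ gives a point of range φ nearby
    have key : ∀ W, IsOpen W → ∀ x ∈ B, x ∈ W → x ∈ V →
        ∃ y, y ∈ (V ∩ range φ) ∩ W := by
      intro W hWo x hxB hxW hxV
      have hxcl : x ∈ closure (range φ) := (hB hxB).1
      obtain ⟨y, hy⟩ := mem_closure_iff.mp hxcl (V ∩ W) (hVo.inter hWo) ⟨hxV, hxW⟩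
      exact ⟨y, ⟨hy.1.1, hy.2⟩, hy.1.2⟩
    rcases hVc.isPreconnected.subset_or_subset hV₁o hV₂o hdisj hVrsub with h | h
    · obtain ⟨y, hy⟩ := key V₂ hV₂o b hbB (hBvV₂ ⟨hbB, hbv⟩) (hBV hbB)
      exact Set.disjoint_left.mp hdisj (h hy.1) hy.2
    · obtain ⟨y, hy⟩ := key V₁ hV₁o a haB (hBuV₁ ⟨haB, hau⟩) (hBV haB)
      exact Set.disjoint_left.mp hdisj hy.2 (h hy.1)
end

section
/- Let T be a property of topological spaces that is invariant under homeomorphism. Let φ : M → N and φ' : M → N' be topological embeddings with open images, let B ⊆ frontier(φ(M)) and B' ⊆ frontier(φ'(M)), and suppose B and B' are equivalent (each covers the other). Say B satisfies the T neighbourhood property (TNP) if every open U ⊇ B in N contains an open V ⊇ B such that the subspace V ∩ φ(M) satisfies T. If B satisfies the TNP, then B' satisfies the TNP. -/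
open Set Topology Filter Metric

/-!
Transport through `φ' ∘ φ⁻¹`. Given `U' ⊇ B'`, pull it back to some `U ⊇ B` (as `B'` covers `B`)
and pick `V ⊆ U` around `B` witnessing the TNP. The open set `A' := φ'(φ⁻¹ V)` lies in `U'` and is
homeomorphic to `V ∩ φ(M)`, but need not contain `B'`. Since `B` covers `B'`, some open `W' ⊇ B'`
meets `φ'(M)` only inside `A'`; so `V' := (U' ∩ W') ∪ A'` is an open neighbourhood of `B'` in `U'`
with `V' ∩ φ'(M) = A'`.
-/

namespace Topology.IsEmbedding

variable {X Y Z : Type*} [TopologicalSpace X] [TopologicalSpace Y] [TopologicalSpace Z]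

noncomputable def homeomorphInterRangeImagePreimage {f : X → Y} {g : X → Z}
    (hf : IsEmbedding f) (hg : IsEmbedding g) (s : Set Y) :
    ↥(s ∩ range f) ≃ₜ ↥(g '' (f ⁻¹' s)) :=
  (Homeomorph.setCongr image_preimage_eq_inter_range.symm).trans
    ((hf.homeomorphImage _).symm.trans (hg.homeomorphImage _))

end Topology.IsEmbedding

theorem Covers.exists_isOpen_inter_range_eq {M N N' : Type*} [TopologicalSpace M]
    [TopologicalSpace N] [TopologicalSpace N'] {φ : M → N} {φ' : M → N'} {B : Set N}
    {B' : Set N'} (h : Covers φ φ' B B') (hφ : Continuous φ) (hφ' : IsOpenMap φ')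
    {V : Set N} (hV : IsOpen V) (hBV : B ⊆ V) {U' : Set N'} (hU' : IsOpen U')
    (hB'U' : B' ⊆ U') (hVU' : φ' '' (φ ⁻¹' V) ⊆ U') :
    ∃ V' : Set N', IsOpen V' ∧ B' ⊆ V' ∧ V' ⊆ U' ∧ V' ∩ range φ' = φ' '' (φ ⁻¹' V) := by
  obtain ⟨W', hW', hB'W', hW'V⟩ := h V hV hBV
  have hW'_inter : W' ∩ range φ' ⊆ φ' '' (φ ⁻¹' V) := by
    rintro _ ⟨hx, m, rfl⟩
    exact ⟨m, hW'V ⟨m, ⟨hx, m, rfl⟩, rfl⟩, rfl⟩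
  refine ⟨U' ∩ W' ∪ φ' '' (φ ⁻¹' V), (hU'.inter hW').union (hφ' _ (hV.preimage hφ)),
    fun b hb => Or.inl ⟨hB'U' hb, hB'W' hb⟩, union_subset inter_subset_left hVU', ?_⟩
  rw [union_inter_distrib_right, inter_eq_left.2 (image_subset_range _ _),
    union_eq_right.2 ((inter_subset_inter_left _ inter_subset_right).trans hW'_inter)]

theorem tnp_invariant_general {M : Type*} {N N' : Type u} [TopologicalSpace M]
    [TopologicalSpace N] [TopologicalSpace N']
    (T : (X : Type u) → [TopologicalSpace X] → Prop)
    (hT : ∀ (X Y : Type u) [TopologicalSpace X] [TopologicalSpace Y],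
      Nonempty (X ≃ₜ Y) → T X → T Y)
    {φ : M → N} {φ' : M → N'}
    (hφ : Topology.IsEmbedding φ)
    (hφ' : Topology.IsEmbedding φ') (hφ'o : IsOpen (range φ'))
    {B : Set N} {B' : Set N'}
    (h1 : Covers φ φ' B B') (h2 : Covers φ' φ B' B)
    (htnp : ∀ U : Set N, IsOpen U → B ⊆ U →
      ∃ V : Set N, IsOpen V ∧ B ⊆ V ∧ V ⊆ U ∧ T ↥(V ∩ range φ)) :
    ∀ U' : Set N', IsOpen U' → B' ⊆ U' →
      ∃ V' : Set N', IsOpen V' ∧ B' ⊆ V' ∧ V' ⊆ U' ∧ T ↥(V' ∩ range φ') := by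
  intro U' hU' hB'U'
  obtain ⟨U, hU, hBU, hUU'⟩ := h2 U' hU' hB'U'
  obtain ⟨V, hV, hBV, hVU, hTV⟩ := htnp U hU hBU
  rw [preimage_inter_range] at hUU'
  have hVU' : φ' '' (φ ⁻¹' V) ⊆ U' := (image_mono (preimage_mono hVU)).trans hUU'
  obtain ⟨V', hV', hB'V', hV'U', hV'_eq⟩ := h1.exists_isOpen_inter_range_eq hφ.continuous
    (IsOpenEmbedding.isOpenMap (IsOpenEmbedding.mk hφ' hφ'o)) hV hBV hU' hB'U' hVU'
  refine ⟨V', hV', hB'V', hV'U', hT _ _ ?_ hTV⟩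
  rw [hV'_eq]
  exact ⟨hφ.homeomorphInterRangeImagePreimage hφ' V⟩

theorem tnp_invariant {M : Type*} {N N' : Type u} [TopologicalSpace M]
    [TopologicalSpace N] [TopologicalSpace N']
    (T : (X : Type u) → [TopologicalSpace X] → Prop)
    (hT : ∀ (X Y : Type u) [TopologicalSpace X] [TopologicalSpace Y],
      Nonempty (X ≃ₜ Y) → T X → T Y)
    {φ : M → N} {φ' : M → N'}
    (hφ : Topology.IsEmbedding φ) (hφo : IsOpen (range φ))
    (hφ' : Topology.IsEmbedding φ') (hφ'o : IsOpen (range φ'))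
    {B : Set N} {B' : Set N'}
    (hB : B ⊆ frontier (range φ)) (hB' : B' ⊆ frontier (range φ'))
    (h1 : Covers φ φ' B B') (h2 : Covers φ' φ B' B)
    (htnp : ∀ U : Set N, IsOpen U → B ⊆ U →
      ∃ V : Set N, IsOpen V ∧ B ⊆ V ∧ V ⊆ U ∧ T ↥(V ∩ range φ)) :
    ∀ U' : Set N', IsOpen U' → B' ⊆ U' →
      ∃ V' : Set N', IsOpen V' ∧ B' ⊆ V' ∧ V' ⊆ U' ∧ T ↥(V' ∩ range φ') :=
  tnp_invariant_general T hT hφ hφ' hφ'o h1 h2 htnp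
end

section
/- Let φ : M → N be a topological embedding with open image into a topological space N, and let p ∈ frontier(φ(M)). Suppose V is an open set in N with V ∩ frontier(φ(M)) = {p}, and W ⊆ V is an open set containing p such that W ∖ {p} is connected. Then W ∖ {p} ⊆ φ(M). -/
open Set Topology

theorem punctured_connected_nbhd_subset_image
    {M N : Type*} [TopologicalSpace M] [TopologicalSpace N]
    {φ : M → N}
    (hφ : Topology.IsEmbedding φ) (hφo : IsOpen (range φ))
    {p : N} (hp : p ∈ frontier (range φ))
    {V : Set N} (hV : IsOpen V) (hVp : V ∩ frontier (range φ) = {p})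
    {W : Set N} (hW : IsOpen W) (hWV : W ⊆ V) (hpW : p ∈ W)
    (hWconn : IsConnected (W \ {p})) :
    W \ {p} ⊆ range φ := by
  have hdisj : Disjoint (range φ) (closure (range φ))ᶜ :=
    disjoint_compl_right.mono_right (compl_subset_compl.mpr subset_closure)
  have hsub : W \ {p} ⊆ range φ ∪ (closure (range φ))ᶜ := by
    intro x hx
    by_cases hxc : x ∈ closure (range φ)
    · left
      by_contra hxr
      have hxf : x ∈ frontier (range φ) := by
        rw [frontier, hφo.interior_eq]; exact ⟨hxc, hxr⟩
      have : x ∈ V ∩ frontier (range φ) := ⟨hWV hx.1, hxf⟩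
      rw [hVp] at this
      exact hx.2 this
    · exact Or.inr hxc
  have hne : ((W \ {p}) ∩ range φ).Nonempty := by
    have hpc : p ∈ closure (range φ) := hp.1
    have : (W ∩ range φ).Nonempty := by
      rcases mem_closure_iff.mp hpc W hW hpW with ⟨x, hxW, hxr⟩
      exact ⟨x, hxW, hxr⟩
    rcases this with ⟨x, hxW, hxr⟩
    have hxp : x ≠ p := by
      rintro rfl
      exact hp.2 (by rw [hφo.interior_eq]; exact hxr)
    exact ⟨x, ⟨hxW, hxp⟩, hxr⟩
  exact hWconn.isPreconnected.subset_left_of_subset_union hφo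
    isClosed_closure.isOpen_compl hdisj hsub hne
end

section
/- Let n ≥ 2, let φ : M → ℝⁿ be a topological embedding of a topological space M with φ(M) open in ℝⁿ, and let p ∈ frontier(φ(M)) be an isolated boundary point (there is an open U ⊆ ℝⁿ with U ∩ frontier(φ(M)) = {p}). Then {p} satisfies the connected neighbourhood property: every open set containing p contains an open set V ∋ p such that V ∩ φ(M) is connected. In fact, for all sufficiently small ε > 0, the punctured ball B(p,ε) ∖ {p} is contained in φ(M), and V can be taken to be such a ball B(p,ε). -/
open Set Topology Metric

/-- In a real normed space of rank `> 1`, a punctured ball is path connected. -/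
lemma isPathConnected_punctured_ball
    {E : Type*} [NormedAddCommGroup E] [NormedSpace ℝ E]
    (h : 1 < Module.rank ℝ E) (p : E) {ε : ℝ} (hε : 0 < ε) :
    IsPathConnected (ball p ε \ {p}) := by
  set r : ℝ := ε / 2 with hr
  have hr0 : 0 < r := by positivity
  have hrε : r < ε := by linarith
  -- the sphere of radius r is inside the punctured ball
  have hsph : sphere p r ⊆ ball p ε \ {p} := by
    intro x hx
    rw [mem_sphere] at hx
    constructor
    · rw [mem_ball]; linarith
    · simp only [mem_singleton_iff]
      intro hxp
      rw [hxp, dist_self] at hx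
      linarith
  -- radial join: every point of the punctured ball is joined to its radial
  -- projection on the sphere of radius r
  have key : ∀ a ∈ ball p ε \ {p},
      ∃ a' ∈ sphere p r, JoinedIn (ball p ε \ {p}) a a' := by
    intro a ha
    obtain ⟨haball, hane⟩ := ha
    have hane' : a - p ≠ 0 := sub_ne_zero.2 hane
    set d : ℝ := ‖a - p‖ with hd
    have hd0 : 0 < d := norm_pos_iff.2 hane'
    have hdε : d < ε := by rwa [mem_ball, dist_eq_norm] at haball
    set u : E := d⁻¹ • (a - p) with hu
    have hu1 : ‖u‖ = 1 := by
      rw [hu, norm_smul, norm_inv, norm_norm, ← hd, inv_mul_cancel₀ hd0.ne']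
    have hdu : d • u = a - p := by
      rw [hu, smul_smul, mul_inv_cancel₀ hd0.ne', one_smul]
    refine ⟨p + r • u, ?_, ?_⟩
    · rw [mem_sphere, dist_eq_norm, add_sub_cancel_left, norm_smul, hu1, mul_one,
        Real.norm_eq_abs, abs_of_pos hr0]
    · apply JoinedIn.of_segment_subset
      intro z hz
      obtain ⟨s, t, hs, ht, hst, rfl⟩ := hz
      have hz' : s • a + t • (p + r • u) - p = (s * d + t * r) • u := by
        have e1 : s • a + t • (p + r • u) - p
            = s • (a - p) + (t * r) • u + ((s + t) - 1) • p := by module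
        rw [e1, hst, sub_self, zero_smul, add_zero, ← hdu, smul_smul, ← add_smul]
      have hv0 : 0 < s * d + t * r := by
        rcases eq_or_lt_of_le hs with hs0 | hs0
        · have ht1 : t = 1 := by linarith
          rw [← hs0, ht1]; simpa using hr0
        · nlinarith
      have hvε : s * d + t * r < ε := by nlinarith
      constructor
      · rw [mem_ball, dist_eq_norm, hz', norm_smul, hu1, mul_one, Real.norm_eq_abs,
          abs_of_pos hv0]
        exact hvε
      · simp only [mem_singleton_iff]
        intro hzp
        have : s • a + t • (p + r • u) - p = 0 := by rw [hzp]; simp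
        rw [hz'] at this
        have := norm_eq_zero.2 this
        rw [norm_smul, hu1, mul_one, Real.norm_eq_abs, abs_of_pos hv0] at this
        exact absurd this hv0.ne'
  -- now combine through the path-connected sphere
  obtain ⟨a, ha⟩ : (ball p ε \ {p}).Nonempty := by
    have := hsph
    obtain ⟨x, hx⟩ : (sphere p r).Nonempty := by
      have : Nontrivial E := by
        rcases subsingleton_or_nontrivial E with hE | hE
        · exfalso
          have : Module.rank ℝ E = 0 := rank_subsingleton' ℝ E
          rw [this] at h
          exact absurd h (by simp)
        · exact hE
      exact NormedSpace.sphere_nonempty.2 hr0.le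
    exact ⟨x, hsph hx⟩
  refine ⟨a, ha, ?_⟩
  intro b hb
  obtain ⟨a', ha', Ja⟩ := key a ha
  obtain ⟨b', hb', Jb⟩ := key b hb
  have hsphere : IsPathConnected (sphere p r) := isPathConnected_sphere h p hr0.le
  have Jmid : JoinedIn (ball p ε \ {p}) a' b' :=
    (hsphere.joinedIn a' ha' b' hb').mono hsph
  exact (Ja.trans Jmid).trans Jb.symm

theorem isolated_point_cnp
    {n : ℕ} (hn : 2 ≤ n) {M : Type*} [TopologicalSpace M]
    {φ : M → EuclideanSpace ℝ (Fin n)}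
    (hφ : Topology.IsEmbedding φ) (hφo : IsOpen (range φ))
    {p : EuclideanSpace ℝ (Fin n)} (hp : p ∈ frontier (range φ))
    (hiso : ∃ U : Set (EuclideanSpace ℝ (Fin n)), IsOpen U ∧
      U ∩ frontier (range φ) = {p}) :
    ∀ U : Set (EuclideanSpace ℝ (Fin n)), IsOpen U → p ∈ U →
      ∃ ε > (0 : ℝ), ball p ε ⊆ U ∧ ball p ε \ {p} ⊆ range φ ∧
        IsConnected (ball p ε ∩ range φ) := by
  have hrank : 1 < Module.rank ℝ (EuclideanSpace ℝ (Fin n)) := by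
    rw [← Module.finrank_eq_rank, finrank_euclideanSpace_fin]
    exact_mod_cast hn
  -- p is not in (range φ) since range φ is open
  have hpnot : p ∉ range φ := by
    intro hcontra
    have : p ∈ range φ ∩ frontier (range φ) := ⟨hcontra, hp⟩
    rw [hφo.inter_frontier_eq] at this
    exact this
  obtain ⟨W, hWo, hWf⟩ := hiso
  have hpW : p ∈ W := by
    have : p ∈ W ∩ frontier (range φ) := by rw [hWf]; exact rfl
    exact this.1
  intro U hUo hpU
  obtain ⟨ε, hε, hball⟩ := Metric.isOpen_iff.1 (hUo.inter hWo) p ⟨hpU, hpW⟩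
  have hPconn : IsConnected (ball p ε \ {p}) :=
    (isPathConnected_punctured_ball hrank p hε).isConnected
  have hPsub : ball p ε \ {p} ⊆ range φ := by
    have hPfront : ∀ x ∈ ball p ε \ {p}, x ∉ frontier (range φ) := by
      intro x hx hxf
      have : x ∈ W ∩ frontier (range φ) := ⟨(hball hx.1).2, hxf⟩
      rw [hWf] at this
      exact hx.2 this
    have hsub : ball p ε \ {p} ⊆ range φ ∪ (closure (range φ))ᶜ := by
      intro x hx
      by_cases hxc : x ∈ closure (range φ)
      · left
        by_contra hxr
        exact hPfront x hx ⟨hxc, by rwa [hφo.interior_eq]⟩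
      · right; exact hxc
    have hne : ((ball p ε \ {p}) ∩ range φ).Nonempty := by
      have hpc : p ∈ closure (range φ) := hp.1
      obtain ⟨q, hq1, hq2⟩ := Metric.mem_closure_iff.1 hpc ε hε
      refine ⟨q, ⟨⟨?_, ?_⟩, hq1⟩⟩
      · rw [mem_ball, dist_comm]; exact hq2
      · simp only [mem_singleton_iff]
        rintro rfl
        exact hpnot hq1
    exact hPconn.isPreconnected.subset_left_of_subset_union hφo
      isClosed_closure.isOpen_compl
      (disjoint_compl_right.mono_left subset_closure) hsub hne
  have heq : ball p ε ∩ range φ = ball p ε \ {p} := by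
    apply Subset.antisymm
    · rintro x ⟨hx1, hx2⟩
      refine ⟨hx1, ?_⟩
      simp only [mem_singleton_iff]
      rintro rfl
      exact hpnot hx2
    · intro x hx
      exact ⟨hx.1, hPsub hx⟩
  exact ⟨ε, hε, fun x hx => (hball hx).1, hPsub, heq ▸ hPconn⟩
end

section
/- Let n ≥ 3, let φ : M → ℝⁿ be a topological embedding of a topological space M with φ(M) open in ℝⁿ, and let p ∈ frontier(φ(M)) be an isolated boundary point (there is an open U ⊆ ℝⁿ with U ∩ frontier(φ(M)) = {p}). Then {p} satisfies the simply connected neighbourhood property: every open set containing p contains an open set V ∋ p such that the subspace V ∩ φ(M) is simply connected. -/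
open Set Topology Metric

/-!
Near an isolated frontier point `p` of the open set `φ(M)`, a small ball `B` around `p` meets the
frontier only in `p`; as `B \ {p}` is connected, it lies in `φ(M)`, so `B ∩ φ(M) = B \ {p}`.
A punctured convex open set in dimension at least three is simply connected: by straight-line
homotopies on the pieces of a fine subdivision, every path is homotopic to a polygonal one, and a
generic point `q` lies on none of the finitely many planes through `p` and the edges of two
polygonal paths, so both can be coned off to `q` inside the punctured set.
-/

section

open Module MeasureTheory unitInterval
open scoped Convex

namespace Path

variable {X : Type*} [TopologicalSpace X]

theorem Homotopic.trans_of_square (F : C(I × I, X)) {a b c d : X} {γ₀ : Path a b} {γ₁ : Path c d}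
    {δ₀ : Path a c} {δ₁ : Path b d} (h₀ : ∀ t, F (0, t) = γ₀ t) (h₁ : ∀ t, F (1, t) = γ₁ t)
    (k₀ : ∀ u, F (u, 0) = δ₀ u) (k₁ : ∀ u, F (u, 1) = δ₁ u) :
    (γ₀.trans δ₁).Homotopic (δ₀.trans γ₁) := by
  let H : ContinuousMap.Homotopy (F.curry 0) (F.curry 1) := ⟨F, fun _ => rfl, fun _ => rfl⟩
  obtain rfl : F (0, 0) = a := by rw [h₀, γ₀.source]
  obtain rfl : F (0, 1) = b := by rw [h₀, γ₀.target]
  obtain rfl : F (1, 0) = c := by rw [h₁, γ₁.source]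
  obtain rfl : F (1, 1) = d := by rw [h₁, γ₁.target]
  have e₀ : γ₀ = Path.id.map (F.curry 0).continuous := by ext t; exact (h₀ t).symm
  have e₁ : γ₁ = Path.id.map (F.curry 1).continuous := by ext t; exact (h₁ t).symm
  have f₀ : δ₀ = H.evalAt 0 := by ext u; exact (k₀ u).symm
  have f₁ : δ₁ = H.evalAt 1 := by ext u; exact (k₁ u).symm
  rw [e₀, e₁, f₀, f₁]
  exact Path.Homotopic.map_trans_evalAt H Path.id

theorem Homotopic.of_trans_right {a b c : X} {γ₁ γ₂ : Path a b} {δ : Path b c}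
    (h : (γ₁.trans δ).Homotopic (γ₂.trans δ)) : γ₁.Homotopic γ₂ := by
  rw [← Quotient.eq, Quotient.mk_trans, Quotient.mk_trans] at h
  rw [← Quotient.eq]
  simpa [Quotient.trans_assoc, Quotient.trans_symm, Quotient.trans_refl] using
    congrArg (·.trans (Quotient.mk δ).symm) h

theorem range_concat_subset {n : ℕ} (p : Fin (n + 1) → X)
    (F : (k : Fin n) → Path (p k.castSucc) (p k.succ)) :
    range (concat p F) ⊆ range p ∪ ⋃ k, range (F k) := by
  induction n with
  | zero => simp
  | succ n ih =>
    rw [concat_succ]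
    refine (trans_range _ _).subset.trans <|
      union_subset ((ih _ _).trans (union_subset_union ?_ ?_)) ?_
    · exact range_comp_subset_range _ _
    · exact iUnion_subset fun k => subset_iUnion (fun k => range (F k)) k.castSucc
    · exact subset_union_of_subset_right (subset_iUnion (fun k => range (F k)) (Fin.last n)) _

theorem Homotopic.cast_concat {x y : X} {n : ℕ} {γ : Path x y} {τ : Fin (n + 1) → I}
    (h₀ : τ 0 = 0) (h₁ : τ (Fin.last n) = 1)
    (F : (k : Fin n) → Path (γ (τ k.castSucc)) (γ (τ k.succ)))
    (hF : ∀ k, (γ.subpath (τ k.castSucc) (τ k.succ)).Homotopic (F k)) :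
    γ.Homotopic ((concat (γ ∘ τ) F).cast (by simp [h₀]) (by simp [h₁])) := by
  have h := ((concat_subpath γ τ).symm.trans (concat_hcomp _ _ F hF)).pathCast
    (by simp [h₀] : x = (γ ∘ τ) 0) (by simp [h₁] : y = (γ ∘ τ) (Fin.last n))
  convert h
  ext t
  simp [subpath, h₀, h₁]

variable {E : Type*} [AddCommGroup E] [Module ℝ E] [TopologicalSpace E]
  [IsTopologicalAddGroup E] [ContinuousSMul ℝ E] {s : Set E}

def segmentIn (x y : s) (h : [(x : E) -[ℝ] y] ⊆ s) : Path x y where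
  toFun t := ⟨Path.segment (x : E) y t, h (range_segment (x : E) y ▸ mem_range_self t)⟩
  continuous_toFun := (Path.segment (x : E) y).continuous.subtype_mk _
  source' := by ext; simp
  target' := by ext; simp

@[simp]
theorem coe_segmentIn_apply (x y : s) (h : [(x : E) -[ℝ] y] ⊆ s) (t : I) :
    (segmentIn x y h t : E) = AffineMap.lineMap (x : E) y (t : ℝ) :=
  rfl

def lineMapSquare (f g : I → E) (hf : Continuous f) (hg : Continuous g)
    (h : ∀ t, [f t -[ℝ] g t] ⊆ s) : C(I × I, s) :=
  ⟨fun ut => ⟨AffineMap.lineMap (f ut.2) (g ut.2) (ut.1 : ℝ),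
    h ut.2 (lineMap_mem_segment ℝ _ _ ut.1.2)⟩, by
      refine Continuous.subtype_mk ?_ _
      simp only [AffineMap.lineMap_apply_module']
      fun_prop⟩

@[simp]
theorem coe_lineMapSquare_apply (f g : I → E) (hf : Continuous f) (hg : Continuous g)
    (h : ∀ t, [f t -[ℝ] g t] ⊆ s) (ut : I × I) :
    (lineMapSquare f g hf hg h ut : E) = AffineMap.lineMap (f ut.2) (g ut.2) (ut.1 : ℝ) :=
  rfl

theorem Homotopic.of_forall_segment_subset {x y : s} {γ₀ γ₁ : Path x y}
    (h : ∀ t, [(γ₀ t : E) -[ℝ] γ₁ t] ⊆ s) : γ₀.Homotopic γ₁ := by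
  refine (Homotopic.trans_refl γ₀).symm.trans <| .trans ?_ (Homotopic.refl_trans γ₁)
  refine Homotopic.trans_of_square (lineMapSquare _ _ (continuous_subtype_val.comp γ₀.continuous)
    (continuous_subtype_val.comp γ₁.continuous) h) ?_ ?_ ?_ ?_
  all_goals intro; ext; simp

theorem Homotopic.segmentIn_of_convex {B : Set E} (hB : Convex ℝ B) (hBs : B ⊆ s) {x y : s}
    (γ : Path x y) (hγ : ∀ t, (γ t : E) ∈ B) (h : [(x : E) -[ℝ] y] ⊆ s) :
    γ.Homotopic (segmentIn x y h) := by
  have hx : (x : E) ∈ B := γ.source ▸ hγ 0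
  have hy : (y : E) ∈ B := γ.target ▸ hγ 1
  refine Homotopic.of_forall_segment_subset fun t => (hB.segment_subset (hγ t) ?_).trans hBs
  exact hB.segment_subset hx hy (lineMap_mem_segment ℝ _ _ t.2)

theorem Homotopic.of_forall_segment_to_point_subset {x y : s} {γ₁ γ₂ : Path x y} {q : E}
    (h₁ : ∀ t, [(γ₁ t : E) -[ℝ] q] ⊆ s) (h₂ : ∀ t, [(γ₂ t : E) -[ℝ] q] ⊆ s) :
    γ₁.Homotopic γ₂ := by
  have hq : q ∈ s := h₁ 0 (right_mem_segment ..)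
  have hx : [(x : E) -[ℝ] q] ⊆ s := by simpa using h₁ 0
  have hy : [(y : E) -[ℝ] q] ⊆ s := by simpa using h₁ 1
  have cone : ∀ γ : Path x y, (∀ t, [(γ t : E) -[ℝ] q] ⊆ s) →
      (γ.trans (segmentIn y ⟨q, hq⟩ hy)).Homotopic
        ((segmentIn x ⟨q, hq⟩ hx).trans (.refl _)) := by
    intro γ h
    refine Homotopic.trans_of_square (lineMapSquare _ _ (continuous_subtype_val.comp γ.continuous)
      continuous_const h) ?_ ?_ ?_ ?_
    all_goals intro; ext; simp
  exact Homotopic.of_trans_right ((cone γ₁ h₁).trans (cone γ₂ h₂).symm)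

def IsPolygonal {x y : s} (γ : Path x y) : Prop :=
  ∃ A : Set E, A.Finite ∧ ∀ t, ∃ a ∈ A, ∃ b ∈ A, (γ t : E) ∈ [a -[ℝ] b]

theorem exists_homotopic_isPolygonal [LocallyConvexSpace ℝ E] (hs : IsOpen s) {x y : s}
    (γ : Path x y) : ∃ γ' : Path x y, γ.Homotopic γ' ∧ γ'.IsPolygonal := by
  obtain ⟨t, ht₀, ht_mono, ⟨N, htN⟩, ht⟩ := exists_monotone_Icc_subset_open_cover_unitInterval
    (c := fun B : {B : Set E // Convex ℝ B ∧ B ⊆ s} => (fun u => (γ u : E)) ⁻¹' interior B)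
    (fun B => isOpen_interior.preimage (continuous_subtype_val.comp γ.continuous))
    (fun u _ => by
      obtain ⟨B, hB, hBc, hBs⟩ :=
        (locallyConvexSpace_iff_exists_convex_subset ℝ E).1 ‹_› (γ u : E) s (hs.mem_nhds (γ u).2)
      exact mem_iUnion.2 ⟨⟨B, hBc, hBs⟩, mem_interior_iff_mem_nhds.2 hB⟩)
  let τ : Fin (N + 1) → I := fun k => t k
  have hpiece : ∀ k : Fin N, ∃ B, Convex ℝ B ∧ B ⊆ s ∧
      ∀ u, (γ.subpath (τ k.castSucc) (τ k.succ) u : E) ∈ B := by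
    intro k
    obtain ⟨⟨B, hBc, hBs⟩, hB⟩ := ht k
    refine ⟨B, hBc, hBs, fun u => ?_⟩
    obtain ⟨w, hw, hwu⟩ := (range_subpath γ _ _).subset (mem_range_self u)
    rw [uIcc_of_le (ht_mono (Nat.le_succ k))] at hw
    exact interior_subset (hwu ▸ hB hw)
  have hseg : ∀ k : Fin N, [(γ (τ k.castSucc) : E) -[ℝ] γ (τ k.succ)] ⊆ s := by
    intro k
    obtain ⟨B, hBc, hBs, hB⟩ := hpiece k
    exact (hBc.segment_subset (by simpa using hB 0) (by simpa using hB 1)).trans hBs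
  refine ⟨_, Homotopic.cast_concat (F := fun k => segmentIn _ _ (hseg k)) (by simpa [τ] using ht₀)
    (htN N le_rfl) fun k => ?_, ?_⟩
  · obtain ⟨B, hBc, hBs, hB⟩ := hpiece k
    exact Homotopic.segmentIn_of_convex hBc hBs _ hB _
  · refine ⟨range fun k => (γ (τ k) : E), finite_range _, fun u => ?_⟩
    rw [cast_coe]
    rcases range_concat_subset (γ ∘ τ) (fun k => segmentIn _ _ (hseg k)) (mem_range_self u)
      with ⟨i, hi⟩ | hu
    · refine ⟨_, mem_range_self i, _, mem_range_self i, ?_⟩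
      simp only [Function.comp_apply] at hi
      rw [← hi]
      exact left_mem_segment ..
    · obtain ⟨k, v, hv⟩ := mem_iUnion.1 hu
      refine ⟨_, mem_range_self k.castSucc, _, mem_range_self k.succ, ?_⟩
      simp only [Function.comp_apply] at hv
      rw [← hv, coe_segmentIn_apply]
      exact lineMap_mem_segment ℝ _ _ v.2

end Path

section Affine

variable {E : Type*} [AddCommGroup E] [Module ℝ E]

theorem affineSpan_triple_ne_top (h : 3 ≤ finrank ℝ E) (a b c : E) :
    affineSpan ℝ {a, b, c} ≠ ⊤ := by
  intro htop
  have h2 := (coplanar_triple ℝ a b c).finrank_le_two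
  rw [← direction_affineSpan, htop, AffineSubspace.direction_top, finrank_top] at h2
  omega

theorem notMem_segment_of_notMem_affineSpan {p a b c q : E} (hc : c ∈ [a -[ℝ] b]) (hcp : c ≠ p)
    (hq : q ∉ affineSpan ℝ {p, a, b}) : p ∉ [c -[ℝ] q] := by
  intro hp
  refine hq (affineSpan_pair_le_of_mem_of_mem ?_ (mem_affineSpan ℝ (by simp))
    ((mem_segment_iff_wbtw.1 hp).right_mem_affineSpan_of_left_ne hcp))
  exact affineSpan_mono ℝ (by simp [subset_def]) ((mem_segment_iff_wbtw.1 hc).mem_affineSpan)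

end Affine

variable {E : Type*} [NormedAddCommGroup E] [NormedSpace ℝ E] [FiniteDimensional ℝ E]

theorem IsOpen.exists_mem_forall_notMem_of_ne_top {ι : Type*} {T : Set ι} (hT : T.Countable)
    {S : ι → AffineSubspace ℝ E} (hS : ∀ i ∈ T, S i ≠ ⊤) {U : Set E} (hU : IsOpen U)
    (hne : U.Nonempty) : ∃ q ∈ U, ∀ i ∈ T, q ∉ S i := by
  borelize E
  by_contra! h
  have hnull : (Measure.addHaar : Measure E) (⋃ i ∈ T, (S i : Set E)) = 0 :=
    (measure_biUnion_null_iff hT).2 fun i hi => Measure.addHaar_affineSubspace _ _ (hS i hi)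
  refine (hU.measure_pos _ hne).ne' (measure_mono_null (fun q hq => ?_) hnull)
  obtain ⟨i, hi, hqi⟩ := h q hq
  exact mem_biUnion hi hqi

theorem Convex.exists_forall_segment_subset_diff_singleton (h : 3 ≤ finrank ℝ E) {C : Set E}
    (hC : Convex ℝ C) (hCo : IsOpen C) (hne : C.Nonempty) (p : E) {A : Set E} (hA : A.Finite) :
    ∃ q ∈ C \ {p}, ∀ a ∈ A, ∀ b ∈ A, ∀ c ∈ [a -[ℝ] b], c ∈ C \ {p} → [c -[ℝ] q] ⊆ C \ {p} := by
  have hT := ((hA.insert p).prod (hA.insert p)).countable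
  obtain ⟨q, hqC, hq⟩ := hCo.exists_mem_forall_notMem_of_ne_top hT
    (fun ab _ => affineSpan_triple_ne_top h p ab.1 ab.2) hne
  have hqp : q ≠ p := fun hqp => hq (p, p) ⟨mem_insert p A, mem_insert p A⟩
    (by rw [hqp]; exact mem_affineSpan ℝ (mem_insert p _))
  refine ⟨q, ⟨hqC, hqp⟩, fun a ha b hb c hc hcS => fun z hz => ⟨hC.segment_subset hcS.1 hqC hz, ?_⟩⟩
  intro hzp
  exact notMem_segment_of_notMem_affineSpan hc hcS.2
    (hq (a, b) ⟨mem_insert_of_mem p ha, mem_insert_of_mem p hb⟩) (mem_singleton_iff.1 hzp ▸ hz)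

theorem Convex.simplyConnectedSpace_diff_singleton (h : 3 ≤ finrank ℝ E) {C : Set E}
    (hC : Convex ℝ C) (hCo : IsOpen C) (hne : C.Nonempty) (p : E) :
    SimplyConnectedSpace (C \ {p} : Set E) := by
  have hS : IsOpen (C \ {p}) := hCo.sdiff isClosed_singleton
  have hvis := fun (A : Set E) (hA : A.Finite) =>
    hC.exists_forall_segment_subset_diff_singleton h hCo hne p hA
  rw [simply_connected_iff_paths_homotopic']
  refine ⟨isPathConnected_iff_pathConnectedSpace.1 (isPathConnected_iff.2 ⟨?_, ?_⟩), ?_⟩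
  · obtain ⟨q, hq, -⟩ := hvis _ finite_empty
    exact ⟨q, hq⟩
  · intro x hx y hy
    obtain ⟨q, -, hq⟩ := hvis _ (toFinite {x, y})
    exact (JoinedIn.of_segment_subset (hq x (by simp) x (by simp) x (left_mem_segment ..) hx)).trans
      (JoinedIn.of_segment_subset (hq y (by simp) y (by simp) y (left_mem_segment ..) hy)).symm
  · intro x y γ₁ γ₂
    obtain ⟨γ₁', h₁, A₁, hA₁, hγ₁⟩ := Path.exists_homotopic_isPolygonal hS γ₁
    obtain ⟨γ₂', h₂, A₂, hA₂, hγ₂⟩ := Path.exists_homotopic_isPolygonal hS γ₂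
    obtain ⟨q, -, hq⟩ := hvis _ (hA₁.union hA₂)
    refine h₁.trans ((Path.Homotopic.of_forall_segment_to_point_subset (q := q) (fun t => ?_)
      (fun t => ?_)).trans h₂.symm)
    · obtain ⟨a, ha, b, hb, hab⟩ := hγ₁ t
      exact hq a (Or.inl ha) b (Or.inl hb) _ hab (γ₁' t).2
    · obtain ⟨a, ha, b, hb, hab⟩ := hγ₂ t
      exact hq a (Or.inr ha) b (Or.inr hb) _ hab (γ₂' t).2

theorem IsOpen.inter_eq_diff_singleton {X : Type*} [TopologicalSpace X] {u K : Set X} {p : X}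
    (hu : IsOpen u) (hp : p ∈ frontier u) (hK : K ∈ 𝓝 p) (hKp : IsPreconnected (K \ {p}))
    (hfront : K ∩ frontier u ⊆ {p}) : K ∩ u = K \ {p} := by
  have hpu : p ∉ u := fun h => hp.2 (hu.interior_eq.symm ▸ h)
  have hsub : K \ {p} ⊆ u := by
    refine hKp.subset_of_closure_inter_subset hu ?_ ?_
    · obtain ⟨z, hzK, hzu⟩ := mem_closure_iff_nhds.1 hp.1 K hK
      exact ⟨z, ⟨hzK, fun hzp => hpu (mem_singleton_iff.1 hzp ▸ hzu)⟩, hzu⟩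
    · rintro z ⟨hzc, hzK, hzp⟩
      by_contra hzu
      exact hzp (hfront ⟨hzK, hzc, fun hzi => hzu (interior_subset hzi)⟩)
  ext z
  exact ⟨fun hz => ⟨hz.1, fun hzp => hpu (mem_singleton_iff.1 hzp ▸ hz.2)⟩,
    fun hz => ⟨hz.1, hsub hz⟩⟩

end

theorem isolated_point_scnp_general
    {n : ℕ} (hn : 3 ≤ n) {M : Type*}
    {φ : M → EuclideanSpace ℝ (Fin n)}
    (hφo : IsOpen (range φ))
    {p : EuclideanSpace ℝ (Fin n)} (hp : p ∈ frontier (range φ))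
    (hiso : ∃ U : Set (EuclideanSpace ℝ (Fin n)), IsOpen U ∧
      U ∩ frontier (range φ) = {p}) :
    ∀ U : Set (EuclideanSpace ℝ (Fin n)), IsOpen U → p ∈ U →
      ∃ V : Set (EuclideanSpace ℝ (Fin n)), IsOpen V ∧ p ∈ V ∧ V ⊆ U ∧
        SimplyConnectedSpace ↥(V ∩ range φ) := by
  intro U hU hpU
  obtain ⟨U₀, hU₀, hU₀p⟩ := hiso
  have hpU₀ : p ∈ U₀ := (hU₀p.symm ▸ mem_singleton p : p ∈ U₀ ∩ frontier (range φ)).1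
  obtain ⟨ε, hε, hball⟩ := Metric.isOpen_iff.1 (hU.inter hU₀) p ⟨hpU, hpU₀⟩
  have hSC := (convex_ball p ε).simplyConnectedSpace_diff_singleton (by simpa using hn)
    isOpen_ball ⟨p, mem_ball_self hε⟩ p
  refine ⟨ball p ε, isOpen_ball, mem_ball_self hε, fun z hz => (hball hz).1, ?_⟩
  rwa [hφo.inter_eq_diff_singleton hp (ball_mem_nhds p hε)
    (isPreconnected_iff_preconnectedSpace.2 inferInstance)
    fun z hz => hU₀p ▸ ⟨(hball hz.1).2, hz.2⟩]

theorem isolated_point_scnp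
    {n : ℕ} (hn : 3 ≤ n) {M : Type*} [TopologicalSpace M]
    {φ : M → EuclideanSpace ℝ (Fin n)}
    (hφ : Topology.IsEmbedding φ) (hφo : IsOpen (range φ))
    {p : EuclideanSpace ℝ (Fin n)} (hp : p ∈ frontier (range φ))
    (hiso : ∃ U : Set (EuclideanSpace ℝ (Fin n)), IsOpen U ∧
      U ∩ frontier (range φ) = {p}) :
    ∀ U : Set (EuclideanSpace ℝ (Fin n)), IsOpen U → p ∈ U →
      ∃ V : Set (EuclideanSpace ℝ (Fin n)), IsOpen V ∧ p ∈ V ∧ V ⊆ U ∧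
        SimplyConnectedSpace ↥(V ∩ range φ) :=
  isolated_point_scnp_general hn hφo hp hiso
end
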